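/- arXiv:2408.01325 — 11 statements merged into one kernel-verified Lean document; each statement's English description precedes it below -/
import Mathlib

section
/- Let (V,d) be a metric space and S, X nonempty finite subsets of V. Define Proj(S, X) := {π_X(y) : y ∈ S}, the projection of S onto X. Then for every y ∈ V, d(y, Proj(S, X)) ≤ d(y, X) + 2·d(y, S). -/
open Metric

theorem Metric.infDist_image_le_infDist_add_two_mul_dist {V : Type*} [PseudoMetricSpace V]
    {S X : Set V} {π : V → V} (hπ : ∀ s ∈ S, dist s (π s) = infDist s X)
    {s : V} (hs : s ∈ S) (y : V) :
    infDist y (π '' S) ≤ infDist y X + 2 * dist y s :=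
  calc infDist y (π '' S) ≤ dist y (π s) := infDist_le_dist_of_mem (Set.mem_image_of_mem π hs)
    _ ≤ dist y s + dist s (π s) := dist_triangle _ _ _
    _ = dist y s + infDist s X := by rw [hπ s hs]
    _ ≤ dist y s + (infDist y X + dist s y) := by gcongr; exact infDist_le_infDist_add_dist
    _ = infDist y X + 2 * dist y s := by rw [dist_comm s y]; ring

theorem stmt1_general {V : Type*} [MetricSpace V] [DecidableEq V] (S X : Finset V)
    (hS : S.Nonempty)
    (πX : V → V)
    (hπX : ∀ y : V, πX y ∈ X ∧ dist y (πX y) = Metric.infDist y (X : Set V))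
    (y : V) :
    Metric.infDist y ((S.image πX : Finset V) : Set V)
      ≤ Metric.infDist y (X : Set V) + 2 * Metric.infDist y (S : Set V) := by
  obtain ⟨s, hsS, hys⟩ := S.finite_toSet.isCompact.exists_infDist_eq_dist hS.to_set y
  rw [Finset.coe_image, hys]
  exact infDist_image_le_infDist_add_two_mul_dist (fun s _ => (hπX s).2) hsS y

/-- Projection of a set: for `Proj(S,X) := {π_X(y) : y ∈ S}`, every point `y` satisfies
`d(y, Proj(S,X)) ≤ d(y, X) + 2·d(y, S)`. -/
theorem stmt1 {V : Type*} [MetricSpace V] [DecidableEq V] (S X : Finset V)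
    (hS : S.Nonempty) (hX : X.Nonempty)
    (πX : V → V)
    (hπX : ∀ y : V, πX y ∈ X ∧ dist y (πX y) = Metric.infDist y (X : Set V))
    (y : V) :
    Metric.infDist y ((S.image πX : Finset V) : Set V)
      ≤ Metric.infDist y (X : Set V) + 2 * Metric.infDist y (S : Set V) :=
  stmt1_general S X hS πX hπX y
end

section
/- Let 𝒱 be a finite metric space with weight w ≡ 1, and for V ⊆ 𝒱 let OPT_k(V) := min over S ⊆ 𝒱 with |S| = k of Σ_{x∈V} d(x, S) (centers may be opened anywhere in 𝒱). If V', V'' ⊆ 𝒱 satisfy |V' ⊕ V''| ≤ γ (symmetric difference), then OPT_{k+γ}(V'') ≤ OPT_k(V'). -/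
/-- Lazy Updates Lemma: if `|V' ⊕ V''| ≤ γ` then `OPT_{k+γ}(V'') ≤ OPT_k(V')`,
where centers may be opened anywhere in the finite metric space `𝒱` and the cost of a
center set `S` on clients `W` is `∑_{x ∈ W} d(x, S)` (as an extended real via `infEdist`). -/
theorem stmt2 {𝒱 : Type*} [Fintype 𝒱] [DecidableEq 𝒱] [MetricSpace 𝒱]
    (k γ : ℕ) (hcard : k + γ ≤ Fintype.card 𝒱)
    (V' V'' : Finset 𝒱) (h : (symmDiff V' V'').card ≤ γ) :
    (⨅ S ∈ {S : Finset 𝒱 | S.card = k + γ}, ∑ x ∈ V'', EMetric.infEdist x (S : Set 𝒱))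
      ≤ ⨅ S ∈ {S : Finset 𝒱 | S.card = k}, ∑ x ∈ V', EMetric.infEdist x (S : Set 𝒱) := by
  refine le_iInf₂ fun S hS => ?_
  simp only [Set.mem_setOf_eq] at hS
  -- card bound on S ∪ (V'' \ V')
  have hdiff : (V'' \ V').card ≤ γ := by
    refine le_trans (Finset.card_le_card ?_) h
    intro x hx
    simp only [Finset.mem_sdiff] at hx
    simp [Finset.mem_symmDiff, hx.1, hx.2]
  have hcard' : (S ∪ (V'' \ V')).card ≤ k + γ := by
    calc (S ∪ (V'' \ V')).card ≤ S.card + (V'' \ V').card := Finset.card_union_le _ _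
    _ ≤ k + γ := by omega
  obtain ⟨T, hTsub, hTcard⟩ := Finset.exists_superset_card_eq hcard' (by simpa using hcard)
  refine le_trans (iInf₂_le T (by simpa using hTcard)) ?_
  have hST : (S : Set 𝒱) ⊆ (T : Set 𝒱) := by
    intro x hx; exact hTsub (Finset.mem_union_left _ hx)
  have hsplit : V'' = (V'' ∩ V') ∪ (V'' \ V') := by
    ext x; simp only [Finset.mem_union, Finset.mem_inter, Finset.mem_sdiff]; tauto
  calc ∑ x ∈ V'', EMetric.infEdist x (T : Set 𝒱)
      = ∑ x ∈ V'' ∩ V', EMetric.infEdist x (T : Set 𝒱)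
        + ∑ x ∈ V'' \ V', EMetric.infEdist x (T : Set 𝒱) := by
        rw [← Finset.sum_union (Finset.disjoint_left.mpr (by
          intro x hx hx'; simp only [Finset.mem_inter, Finset.mem_sdiff] at hx hx'; tauto)),
          ← hsplit]
    _ = ∑ x ∈ V'' ∩ V', EMetric.infEdist x (T : Set 𝒱) := by
        have h0 : ∑ x ∈ V'' \ V', EMetric.infEdist x (T : Set 𝒱) = 0 := by
          refine Finset.sum_eq_zero fun x hx => ?_
          have : x ∈ T := hTsub (Finset.mem_union_right _ hx)
          exact EMetric.infEdist_zero_of_mem (by exact_mod_cast this)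
        rw [h0, add_zero]
    _ ≤ ∑ x ∈ V', EMetric.infEdist x (T : Set 𝒱) :=
        Finset.sum_le_sum_of_subset Finset.inter_subset_right
    _ ≤ ∑ x ∈ V', EMetric.infEdist x (S : Set 𝒱) :=
        Finset.sum_le_sum fun x _ => EMetric.infEdist_anti hST
end

section
/- Let (V,d) be a finite metric space, k a positive integer with |V| > k, and let S_{-1} = V. Suppose for each i ≥ 0, S_i is chosen as a minimizer of cl(S, V) over subsets S ⊆ S_{i-1} with |S| = k + s_i (where s_i ≥ 0 are given nonnegative integers and k + s_i ≤ |S_{i-1}|). Then for every i ≥ 0, cl(S_i, V) ≤ cl(S_{i-1}, V) + 2·OPT_{k+s_i}(V). -/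
/-- Static Hierarchy Lemma: if each layer `S i` is a minimum-cost subset of the previous
layer of size `k + s i`, then `cl(S_i, V) ≤ cl(S_{i-1}, V) + 2·OPT_{k+s_i}(V)`. -/
theorem stmt3 {V : Type*} [Fintype V] [DecidableEq V] [MetricSpace V]
    (k : ℕ) (hk : k < Fintype.card V) (s : ℕ → ℕ) (S : ℕ → Finset V)
    (prev : ℕ → Finset V)
    (hprev0 : prev 0 = Finset.univ) (hprevS : ∀ i, prev (i + 1) = S i)
    (hcard : ∀ i, k + s i ≤ (prev i).card)
    (hSsub : ∀ i, S i ⊆ prev i)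
    (hScard : ∀ i, (S i).card = k + s i)
    (hmin : ∀ i, ∀ T ⊆ prev i, T.card = k + s i →
      (∑ x : V, EMetric.infEdist x ((S i : Finset V) : Set V))
        ≤ ∑ x : V, EMetric.infEdist x ((T : Finset V) : Set V))
    (i : ℕ) :
    (∑ x : V, EMetric.infEdist x ((S i : Finset V) : Set V))
      ≤ (∑ x : V, EMetric.infEdist x ((prev i : Finset V) : Set V))
        + 2 * (⨅ T ∈ {T : Finset V | T.card = k + s i},
            ∑ x : V, EMetric.infEdist x ((T : Finset V) : Set V)) := by
  classical
  set n := k + s i with hn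
  have hVne : (Finset.univ : Finset V).Nonempty := by
    rw [Finset.univ_nonempty_iff]
    have : 0 < Fintype.card V := Nat.lt_of_le_of_lt (Nat.zero_le k) hk
    exact Fintype.card_pos_iff.mp this
  -- case: prev i empty
  rcases Finset.eq_empty_or_nonempty (prev i) with hpe | hpne
  · obtain ⟨x₀, _⟩ := hVne
    have htop : (∑ x : V, EMetric.infEdist x ((prev i : Finset V) : Set V)) = ⊤ := by
      have h1 : (⊤ : ENNReal) ≤ ∑ x : V, EMetric.infEdist x ((prev i : Finset V) : Set V) := by
        have := Finset.single_le_sum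
          (f := fun x : V => EMetric.infEdist x ((prev i : Finset V) : Set V))
          (fun x _ => zero_le) (Finset.mem_univ x₀)
        simpa [hpe, EMetric.infEdist, Metric.infEDist_empty] using this
      exact top_le_iff.mp h1
    rw [htop, top_add]
    exact le_top
  -- prev i nonempty: projection argument
  -- choose an optimal T₀ among all sets of size n
  have hTex : ∃ T : Finset V, T.card = n := by
    obtain ⟨T, _, hT⟩ := Finset.exists_subset_card_eq (hcard i)
    exact ⟨T, hT⟩
  set 𝒯 : Finset (Finset V) := Finset.univ.filter (fun T : Finset V => T.card = n) with h𝒯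
  have h𝒯ne : 𝒯.Nonempty := by
    obtain ⟨T, hT⟩ := hTex
    exact ⟨T, by simp [h𝒯, hT]⟩
  obtain ⟨T₀, hT₀mem, hT₀min⟩ := Finset.exists_min_image 𝒯
    (fun T : Finset V => ∑ x : V, EMetric.infEdist x ((T : Finset V) : Set V)) h𝒯ne
  have hT₀card : T₀.card = n := by simpa [h𝒯] using hT₀mem
  -- the inf is bounded below by the value at T₀
  have hinf : (∑ x : V, EMetric.infEdist x ((T₀ : Finset V) : Set V))
      ≤ ⨅ T ∈ {T : Finset V | T.card = k + s i},
          ∑ x : V, EMetric.infEdist x ((T : Finset V) : Set V) := by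
    refine le_iInf₂ fun T hT => ?_
    exact hT₀min T (by simpa [h𝒯] using hT)
  -- projection map
  have hproj : ∀ t : V, ∃ y ∈ prev i, ∀ z ∈ prev i, edist t y ≤ edist t z :=
    fun t => Finset.exists_min_image (prev i) (fun y => edist t y) hpne
  choose p hpmem hpmin using hproj
  -- build T' : superset of image of T₀ inside prev i with card n
  have himgsub : T₀.image p ⊆ prev i := by
    intro y hy
    obtain ⟨t, _, rfl⟩ := Finset.mem_image.mp hy
    exact hpmem t
  obtain ⟨T', hT'sub1, hT'sub, hT'card⟩ :=
    Finset.exists_subsuperset_card_eq himgsub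
      (le_trans (Finset.card_image_le) (le_of_eq hT₀card)) (hcard i)
  -- pointwise bound
  have hpoint : ∀ x : V, EMetric.infEdist x ((T' : Finset V) : Set V)
      ≤ EMetric.infEdist x ((prev i : Finset V) : Set V)
        + 2 * EMetric.infEdist x ((T₀ : Finset V) : Set V) := by
    intro x
    rcases Finset.eq_empty_or_nonempty T₀ with hT₀e | hT₀ne
    · have : EMetric.infEdist x ((T₀ : Finset V) : Set V) = ⊤ := by
        simp [hT₀e, EMetric.infEdist, Metric.infEDist_empty]
      rw [this]
      simp [ENNReal.mul_top]
    · obtain ⟨t, htmem, htmin⟩ := Finset.exists_min_image T₀ (fun y => edist x y) hT₀ne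
      have h1 : EMetric.infEdist x ((T' : Finset V) : Set V) ≤ edist x (p t) := by
        apply EMetric.infEdist_le_edist_of_mem
        exact_mod_cast hT'sub1 (Finset.mem_image_of_mem p htmem)
      have h2 : edist x (p t) ≤ edist x t + edist t (p t) := edist_triangle _ _ _
      have h3 : edist t (p t) ≤ EMetric.infEdist t ((prev i : Finset V) : Set V) := by
        refine EMetric.le_infEdist.mpr ?_
        intro z hz
        exact hpmin t z (by exact_mod_cast hz)
      have h4 : EMetric.infEdist t ((prev i : Finset V) : Set V)
          ≤ edist t x + EMetric.infEdist x ((prev i : Finset V) : Set V) :=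
        EMetric.infEdist_le_edist_add_infEdist
      have h5 : edist x t ≤ EMetric.infEdist x ((T₀ : Finset V) : Set V) := by
        refine EMetric.le_infEdist.mpr ?_
        intro z hz
        exact htmin z (by exact_mod_cast hz)
      calc EMetric.infEdist x ((T' : Finset V) : Set V)
          ≤ edist x t + (edist t x + EMetric.infEdist x ((prev i : Finset V) : Set V)) :=
            le_trans h1 (le_trans h2 (add_le_add_right (le_trans h3 h4) _))
        _ = EMetric.infEdist x ((prev i : Finset V) : Set V) + (edist x t + edist x t) := by
            rw [edist_comm t x]; ring
        _ ≤ EMetric.infEdist x ((prev i : Finset V) : Set V)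
            + 2 * EMetric.infEdist x ((T₀ : Finset V) : Set V) := by
            apply add_le_add_right
            rw [two_mul]
            exact add_le_add h5 h5
  -- combine
  have hstep : (∑ x : V, EMetric.infEdist x ((S i : Finset V) : Set V))
      ≤ ∑ x : V, EMetric.infEdist x ((T' : Finset V) : Set V) :=
    hmin i T' hT'sub hT'card
  calc (∑ x : V, EMetric.infEdist x ((S i : Finset V) : Set V))
      ≤ ∑ x : V, EMetric.infEdist x ((T' : Finset V) : Set V) := hstep
    _ ≤ ∑ x : V, (EMetric.infEdist x ((prev i : Finset V) : Set V)
          + 2 * EMetric.infEdist x ((T₀ : Finset V) : Set V)) :=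
        Finset.sum_le_sum fun x _ => hpoint x
    _ = (∑ x : V, EMetric.infEdist x ((prev i : Finset V) : Set V))
          + 2 * ∑ x : V, EMetric.infEdist x ((T₀ : Finset V) : Set V) := by
        rw [Finset.sum_add_distrib, Finset.mul_sum]
    _ ≤ (∑ x : V, EMetric.infEdist x ((prev i : Finset V) : Set V))
        + 2 * (⨅ T ∈ {T : Finset V | T.card = k + s i},
            ∑ x : V, EMetric.infEdist x ((T : Finset V) : Set V)) := by
        exact add_le_add_right (mul_le_mul_right hinf 2) _
end

section
/- With the hierarchy of the previous statement, taking ℓ+2 levels with slacks s_0 ≥ s_1 ≥ ⋯ ≥ s_{ℓ+1} = 0, the final set S_{ℓ+1} has size k and satisfies cl(S_{ℓ+1}, V) ≤ 2(ℓ+2)·OPT_k(V). -/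
/-- Final guarantee of the static hierarchy: with `ℓ+2` levels and slacks
`s_0 ≥ s_1 ≥ ⋯ ≥ s_{ℓ+1} = 0`, the final set `S_{ℓ+1}` has size `k` and its cost is at
most `2(ℓ+2)·OPT_k(V)`. -/
theorem stmt4 {V : Type*} [Fintype V] [DecidableEq V] [MetricSpace V]
    (k : ℕ) (hk : k < Fintype.card V) (s : ℕ → ℕ) (S : ℕ → Finset V)
    (prev : ℕ → Finset V) (ℓ : ℕ)
    (hprev0 : prev 0 = Finset.univ) (hprevS : ∀ i, prev (i + 1) = S i)
    (hcard : ∀ i, k + s i ≤ (prev i).card)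
    (hSsub : ∀ i, S i ⊆ prev i)
    (hScard : ∀ i, (S i).card = k + s i)
    (hmin : ∀ i, ∀ T ⊆ prev i, T.card = k + s i →
      (∑ x : V, EMetric.infEdist x ((S i : Finset V) : Set V))
        ≤ ∑ x : V, EMetric.infEdist x ((T : Finset V) : Set V))
    (hanti : ∀ i j, i ≤ j → s j ≤ s i)
    (hlast : s (ℓ + 1) = 0) :
    (S (ℓ + 1)).card = k ∧
    (∑ x : V, EMetric.infEdist x ((S (ℓ + 1) : Finset V) : Set V))
      ≤ 2 * ((ℓ : ENNReal) + 2) * (⨅ T ∈ {T : Finset V | T.card = k},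
          ∑ x : V, EMetric.infEdist x ((T : Finset V) : Set V)) := by
  have hcardS : (S (ℓ + 1)).card = k := by rw [hScard, hlast]; omega
  refine ⟨hcardS, ?_⟩
  set cost : Finset V → ENNReal := fun A => ∑ x : V, EMetric.infEdist x (A : Set V) with hcost
  -- the constant is nonzero
  have hVne : (Finset.univ : Finset V).Nonempty := by
    rw [← Finset.card_pos]
    rw [Finset.card_univ]; omega
  by_cases hk0 : k = 0
  · -- infimum is ⊤
    have hinf : (⨅ T ∈ {T : Finset V | T.card = k}, cost T) = ⊤ := by
      rw [eq_top_iff]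
      refine le_iInf₂ fun T hT => ?_
      have : T = ∅ := by
        rwa [Set.mem_setOf_eq, hk0, Finset.card_eq_zero] at hT
      subst this
      simp only [hcost, Finset.coe_empty, EMetric.infEdist_empty]
      simp only [show ∀ x : V, EMetric.infEdist x (∅ : Set V) = ⊤ from fun x => EMetric.infEdist_empty]
      rw [Finset.sum_const, nsmul_eq_mul, ENNReal.mul_top]
      exact Nat.cast_ne_zero.mpr (by rw [Finset.card_univ]; omega)
    rw [hinf, ENNReal.mul_top (by simp)]
    exact le_top
  · -- main case : k ≥ 1
    -- pick an optimal T₀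
    obtain ⟨T₀, hT₀mem, hT₀min⟩ := Finset.exists_min_image
      ((Finset.univ : Finset (Finset V)).filter fun T => T.card = k) cost
      (by
        obtain ⟨T, _, hT⟩ := Finset.exists_subset_card_eq (s := (Finset.univ : Finset V)) (n := k)
          (by rw [Finset.card_univ]; omega)
        exact ⟨T, by simp [hT]⟩)
    simp only [Finset.mem_filter, Finset.mem_univ, true_and] at hT₀mem
    have hT₀ne : T₀.Nonempty := Finset.card_pos.mp (by omega)
    -- infimum equals cost T₀
    have hinf : (⨅ T ∈ {T : Finset V | T.card = k}, cost T) = cost T₀ := by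
      refine le_antisymm (iInf₂_le T₀ hT₀mem) (le_iInf₂ fun T hT => ?_)
      exact hT₀min T (by simp [Set.mem_setOf_eq.mp hT])
    -- one-step bound
    have step : ∀ i, cost (S i) ≤ 2 * cost T₀ + cost (prev i) := by
      intro i
      have hpne : (prev i).Nonempty := by
        rw [← Finset.card_pos]
        have := hcard i; omega
      have hex : ∀ t : V, ∃ y ∈ prev i, ∀ z ∈ prev i, edist t y ≤ edist t z :=
        fun t => Finset.exists_min_image (prev i) (edist t) hpne
      choose f hf1 hf2 using hex
      have himg : T₀.image f ⊆ prev i := by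
        intro y hy
        obtain ⟨t, _, rfl⟩ := Finset.mem_image.mp hy
        exact hf1 t
      obtain ⟨T', hsub1, hsub2, hT'card⟩ :=
        Finset.exists_subsuperset_card_eq himg
          (le_trans (Finset.card_image_le) (by omega)) (hcard i)
      refine le_trans (hmin i T' hsub2 hT'card) ?_
      -- pointwise bound then sum
      have hpt : ∀ x : V, EMetric.infEdist x (T' : Set V)
          ≤ 2 * EMetric.infEdist x (T₀ : Set V) + EMetric.infEdist x ((prev i : Finset V) : Set V) := by
        intro x
        obtain ⟨t, ht, htmin⟩ := Finset.exists_min_image T₀ (edist x) hT₀ne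
        have h1 : EMetric.infEdist x (T' : Set V) ≤ edist x (f t) :=
          EMetric.infEdist_le_edist_of_mem (by
            exact_mod_cast hsub1 (Finset.mem_image_of_mem f ht))
        have h2 : edist x (f t) ≤ edist x t + edist t (f t) := edist_triangle _ _ _
        have h3 : edist t (f t) ≤ EMetric.infEdist t ((prev i : Finset V) : Set V) :=
          EMetric.le_infEdist.mpr (fun z hz => hf2 t z (by exact_mod_cast hz))
        have h4 : EMetric.infEdist t ((prev i : Finset V) : Set V)
            ≤ EMetric.infEdist x ((prev i : Finset V) : Set V) + edist t x :=
          EMetric.infEdist_le_infEdist_add_edist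
        have h5 : edist x t ≤ EMetric.infEdist x (T₀ : Set V) :=
          EMetric.le_infEdist.mpr (fun z hz => htmin z (by exact_mod_cast hz))
        calc EMetric.infEdist x (T' : Set V) ≤ edist x t + edist t (f t) := h1.trans h2
          _ ≤ edist x t + (EMetric.infEdist x ((prev i : Finset V) : Set V) + edist t x) :=
              add_le_add_right (h3.trans h4) _
          _ = 2 * edist x t + EMetric.infEdist x ((prev i : Finset V) : Set V) := by
              rw [edist_comm t x]; ring
          _ ≤ 2 * EMetric.infEdist x (T₀ : Set V) + EMetric.infEdist x ((prev i : Finset V) : Set V) := by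
              gcongr
      calc cost T' ≤ ∑ x : V, (2 * EMetric.infEdist x (T₀ : Set V)
            + EMetric.infEdist x ((prev i : Finset V) : Set V)) :=
            Finset.sum_le_sum fun x _ => hpt x
        _ = 2 * cost T₀ + cost (prev i) := by
            rw [Finset.sum_add_distrib, Finset.mul_sum]
    -- cost of univ is 0
    have huniv : cost (prev 0) = 0 := by
      rw [hprev0]
      refine Finset.sum_eq_zero fun x _ => ?_
      exact EMetric.infEdist_zero_of_mem (by simp)
    -- induction
    have main : ∀ i, cost (S i) ≤ 2 * ((i : ENNReal) + 1) * cost T₀ := by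
      intro i
      induction i with
      | zero =>
        have := step 0
        rw [huniv, add_zero] at this
        simpa using this
      | succ n ih =>
        have h1 := step (n + 1)
        rw [hprevS n] at h1
        calc cost (S (n + 1)) ≤ 2 * cost T₀ + cost (S n) := h1
          _ ≤ 2 * cost T₀ + 2 * ((n : ENNReal) + 1) * cost T₀ := add_le_add_right ih _
          _ = 2 * (((n : ℕ) + 1 : ℕ) + 1 : ENNReal) * cost T₀ := by push_cast; ring
    rw [hinf]
    have := main (ℓ + 1)
    calc cost (S (ℓ + 1)) ≤ 2 * (((ℓ : ℕ) + 1 : ℕ) + 1 : ENNReal) * cost T₀ := by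
          exact_mod_cast this
      _ = 2 * ((ℓ : ENNReal) + 2) * cost T₀ := by push_cast; ring
end

section
/- Let S and S* be subsets of a finite metric space with |S| = |S*| = k, and let π_S : S* → S map each point of S* to its nearest point in S. Define S_0 = {x ∈ S : |π_S^{-1}(x)| = 0}, S_1 = {x ∈ S : |π_S^{-1}(x)| = 1}, and S*_1 = {x* ∈ S* : π_S(x*) ∈ S_1}. Then there exists a map σ : S* → S such that (i) σ(x*) = π_S(x*) ∈ S_1 for all x* ∈ S*_1, (ii) σ(x*) ∈ S_0 for all x* ∈ S* \ S*_1, and (iii) |σ^{-1}(x)| ≤ 2 for all x ∈ S. -/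
variable {α : Type*} [DecidableEq α]

/-- Points of `S` with exactly one preimage in `S*` under `πS`. -/
def S1set (S Sstar : Finset α) (πS : α → α) : Finset α :=
  S.filter (fun x => (Sstar.filter (fun y => πS y = x)).card = 1)

/-- Points of `S` with no preimage in `S*` under `πS`. -/
def S0set (S Sstar : Finset α) (πS : α → α) : Finset α :=
  S.filter (fun x => (Sstar.filter (fun y => πS y = x)).card = 0)

/-- Points of `S*` mapped by `πS` into `S1set`. -/
def Sstar1set (S Sstar : Finset α) (πS : α → α) : Finset α :=
  Sstar.filter (fun y => πS y ∈ S1set S Sstar πS)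

lemma pack_lemma (A B : Finset α) (h : A.card ≤ 2 * B.card) :
    ∃ f : α → α, (∀ x ∈ A, f x ∈ B) ∧ ∀ c, (A.filter (fun x => f x = c)).card ≤ 2 := by
  rcases A.eq_empty_or_nonempty with rfl | hA
  · exact ⟨id, by simp, by simp⟩
  obtain ⟨b0, hb0⟩ : B.Nonempty := by
    have h1 : 0 < A.card := Finset.card_pos.mpr hA
    exact Finset.card_pos.mp (by omega)
  have hBlen : B.toList.length = B.card := B.length_toList
  have hAlen : A.toList.length = A.card := A.length_toList
  have hidx : ∀ x ∈ A, A.toList.idxOf x / 2 < B.toList.length := by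
    intro x hx
    have : A.toList.idxOf x < A.toList.length :=
      List.idxOf_lt_length_iff.mpr (Finset.mem_toList.mpr hx)
    omega
  refine ⟨fun x => B.toList.getD (A.toList.idxOf x / 2) b0, ?_, ?_⟩
  · intro x hx
    show B.toList.getD (A.toList.idxOf x / 2) b0 ∈ B
    rw [List.getD_eq_getElem _ _ (hidx x hx)]
    exact Finset.mem_toList.mp (List.getElem_mem _)
  · intro c
    by_contra hcon
    push_neg at hcon
    obtain ⟨x, y, z, hx, hy, hz, hxy, hxz, hyz⟩ :=
      Finset.two_lt_card_iff.mp hcon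
    simp only [Finset.mem_filter] at hx hy hz
    have key : ∀ u v, u ∈ A → v ∈ A →
        B.toList.getD (A.toList.idxOf u / 2) b0 = B.toList.getD (A.toList.idxOf v / 2) b0 →
        A.toList.idxOf u / 2 = A.toList.idxOf v / 2 := by
      intro u v hu hv he
      rw [List.getD_eq_getElem _ _ (hidx u hu), List.getD_eq_getElem _ _ (hidx v hv)] at he
      exact (B.nodup_toList.getElem_inj_iff).mp he
    have h1 := key x y hx.1 hy.1 (hx.2.trans hy.2.symm)
    have h2 := key x z hx.1 hz.1 (hx.2.trans hz.2.symm)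
    have ixy : A.toList.idxOf x ≠ A.toList.idxOf y := fun he => hxy
      ((List.idxOf_inj (Finset.mem_toList.mpr hx.1)).mp he)
    have ixz : A.toList.idxOf x ≠ A.toList.idxOf z := fun he => hxz
      ((List.idxOf_inj (Finset.mem_toList.mpr hx.1)).mp he)
    have iyz : A.toList.idxOf y ≠ A.toList.idxOf z := fun he => hyz
      ((List.idxOf_inj (Finset.mem_toList.mpr hy.1)).mp he)
    omega

/-- Existence of the mapping `σ : S* → S` with: `σ = πS` on `S*_1`, `σ` maps
`S* \ S*_1` into `S_0`, and each point of `S` has at most `2` preimages under `σ`. -/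
theorem stmt5 (k : ℕ) (S Sstar : Finset α)
    (hS : S.card = k) (hSstar : Sstar.card = k)
    (πS : α → α) (hπ : ∀ x ∈ Sstar, πS x ∈ S) :
    ∃ σ : α → α,
      (∀ x ∈ Sstar1set S Sstar πS, σ x = πS x ∧ πS x ∈ S1set S Sstar πS) ∧
      (∀ x ∈ Sstar \ Sstar1set S Sstar πS, σ x ∈ S0set S Sstar πS) ∧
      (∀ x ∈ S, (Sstar.filter (fun y => σ y = x)).card ≤ 2) := by
  classical
  set S0 := S0set S Sstar πS with hS0def
  set S1 := S1set S Sstar πS with hS1def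
  set T := Sstar \ Sstar1set S Sstar πS with hTdef
  -- basic subsets
  have hsub1 : Sstar1set S Sstar πS ⊆ Sstar := Finset.filter_subset _ _
  have hS0sub : S0 ⊆ S := Finset.filter_subset _ _
  have hS1sub : S1 ⊆ S := Finset.filter_subset _ _
  -- counting
  have hsum : Sstar.card = ∑ x ∈ S, (Sstar.filter (fun y => πS y = x)).card :=
    Finset.card_eq_sum_card_fiberwise hπ
  have hstar1card : (Sstar1set S Sstar πS).card = S1.card := by
    have h1 : (Sstar1set S Sstar πS).card
        = ∑ x ∈ S1, ((Sstar1set S Sstar πS).filter (fun y => πS y = x)).card := by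
      apply Finset.card_eq_sum_card_fiberwise
      intro y hy
      exact (Finset.mem_filter.mp hy).2
    rw [h1]
    rw [Finset.sum_congr rfl (fun x hx => ?_), Finset.sum_const, smul_eq_mul, mul_one]
    have hfe : (Sstar1set S Sstar πS).filter (fun y => πS y = x)
        = Sstar.filter (fun y => πS y = x) := by
      ext y
      simp only [Sstar1set, Finset.mem_filter]
      constructor
      · rintro ⟨⟨hy, _⟩, he⟩; exact ⟨hy, he⟩
      · rintro ⟨hy, he⟩; exact ⟨⟨hy, he ▸ hx⟩, he⟩
    rw [hfe]
    exact (Finset.mem_filter.mp hx).2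
  have hTcard : T.card = k - S1.card := by
    rw [hTdef, Finset.card_sdiff_of_subset hsub1, hSstar, hstar1card]
  -- split S into S0, S1, rest
  have hdisj01 : Disjoint S0 S1 := by
    rw [Finset.disjoint_left]
    intro x hx hx'
    have h0 := (Finset.mem_filter.mp hx).2
    have h1 := (Finset.mem_filter.mp hx').2
    omega
  have hsubU : S0 ∪ S1 ⊆ S := Finset.union_subset hS0sub hS1sub
  set Sr := S \ (S0 ∪ S1) with hSrdef
  have hdisjU : Disjoint (S0 ∪ S1) Sr := Finset.disjoint_sdiff
  have hSeq : (S0 ∪ S1) ∪ Sr = S := Finset.union_sdiff_of_subset hsubU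
  have hcards : S0.card + S1.card + Sr.card = k := by
    have := Finset.card_union_of_disjoint hdisjU
    rw [hSeq, Finset.card_union_of_disjoint hdisj01] at this
    omega
  have hsumsplit : (∑ x ∈ S, (Sstar.filter (fun y => πS y = x)).card)
      = (∑ x ∈ S0, (Sstar.filter (fun y => πS y = x)).card)
      + (∑ x ∈ S1, (Sstar.filter (fun y => πS y = x)).card)
      + (∑ x ∈ Sr, (Sstar.filter (fun y => πS y = x)).card) := by
    rw [← hSeq, Finset.sum_union hdisjU, Finset.sum_union hdisj01]
  have hsum0 : (∑ x ∈ S0, (Sstar.filter (fun y => πS y = x)).card) = 0 := by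
    apply Finset.sum_eq_zero
    intro x hx
    exact (Finset.mem_filter.mp hx).2
  have hsum1 : (∑ x ∈ S1, (Sstar.filter (fun y => πS y = x)).card) = S1.card := by
    have hone : ∀ x ∈ S1, (Sstar.filter (fun y => πS y = x)).card = 1 :=
      fun x hx => (Finset.mem_filter.mp hx).2
    rw [Finset.sum_congr rfl hone, Finset.sum_const, smul_eq_mul, mul_one]
  have hsumr : 2 * Sr.card ≤ ∑ x ∈ Sr, (Sstar.filter (fun y => πS y = x)).card := by
    rw [two_mul]
    calc Sr.card + Sr.card = ∑ _x ∈ Sr, 2 := by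
          rw [Finset.sum_const, smul_eq_mul]; ring
      _ ≤ _ := by
          apply Finset.sum_le_sum
          intro x hx
          rw [hSrdef, Finset.mem_sdiff, Finset.mem_union] at hx
          obtain ⟨hxS, hxn⟩ := hx
          have h0 : (Sstar.filter (fun y => πS y = x)).card ≠ 0 := by
            intro h; exact hxn (Or.inl (Finset.mem_filter.mpr ⟨hxS, h⟩))
          have h1 : (Sstar.filter (fun y => πS y = x)).card ≠ 1 := by
            intro h; exact hxn (Or.inr (Finset.mem_filter.mpr ⟨hxS, h⟩))
          omega
  have hkey : T.card ≤ 2 * S0.card := by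
    rw [hTcard]
    have hk : Sstar.card = k := hSstar
    omega
  -- build σ
  obtain ⟨f, hf1, hf2⟩ := pack_lemma T S0 hkey
  refine ⟨fun y => if y ∈ Sstar1set S Sstar πS then πS y else f y, ?_, ?_, ?_⟩
  · intro x hx
    refine ⟨if_pos hx, ?_⟩
    exact (Finset.mem_filter.mp hx).2
  · intro x hx
    have hnot : x ∉ Sstar1set S Sstar πS := (Finset.mem_sdiff.mp hx).2
    simp only [if_neg hnot]
    exact hf1 x hx
  · intro x hxS
    have hsplit : Sstar = Sstar1set S Sstar πS ∪ T :=
      (Finset.union_sdiff_of_subset hsub1).symm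
    show (Sstar.filter
      (fun y => (if y ∈ Sstar1set S Sstar πS then πS y else f y) = x)).card ≤ 2
    have hset := congrArg
      (fun s => Finset.filter
        (fun y => (if y ∈ Sstar1set S Sstar πS then πS y else f y) = x) s) hsplit
    simp only [Finset.filter_union] at hset
    rw [hset]
    refine le_trans (Finset.card_union_le _ _) ?_
    have hc1 : ((Sstar1set S Sstar πS).filter
        (fun y => (if y ∈ Sstar1set S Sstar πS then πS y else f y) = x)).card
        ≤ if x ∈ S1 then 1 else 0 := by
      have heq : (Sstar1set S Sstar πS).filter
          (fun y => (if y ∈ Sstar1set S Sstar πS then πS y else f y) = x)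
          = (Sstar1set S Sstar πS).filter (fun y => πS y = x) := by
        apply Finset.filter_congr
        intro y hy
        rw [if_pos hy]
      rw [heq]
      by_cases hxs : x ∈ S1
      · rw [if_pos hxs]
        have hsub : (Sstar1set S Sstar πS).filter (fun y => πS y = x)
            ⊆ Sstar.filter (fun y => πS y = x) :=
          Finset.filter_subset_filter _ hsub1
        have := Finset.card_le_card hsub
        have hx1 : (Sstar.filter (fun y => πS y = x)).card = 1 :=
          (Finset.mem_filter.mp hxs).2
        omega
      · rw [if_neg hxs]
        simp only [Nat.le_zero, Finset.card_eq_zero, Finset.filter_eq_empty_iff]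
        intro y hy he
        have := (Finset.mem_filter.mp hy).2
        rw [he] at this
        exact hxs this
    have hc2 : (T.filter
        (fun y => (if y ∈ Sstar1set S Sstar πS then πS y else f y) = x)).card
        ≤ if x ∈ S0 then 2 else 0 := by
      have heq : T.filter
          (fun y => (if y ∈ Sstar1set S Sstar πS then πS y else f y) = x)
          = T.filter (fun y => f y = x) := by
        apply Finset.filter_congr
        intro y hy
        rw [if_neg (Finset.mem_sdiff.mp hy).2]
      rw [heq]
      by_cases hxs : x ∈ S0
      · rw [if_pos hxs]; exact hf2 x
      · rw [if_neg hxs]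
        simp only [Nat.le_zero, Finset.card_eq_zero, Finset.filter_eq_empty_iff]
        intro y hy he
        exact hxs (he ▸ hf1 y hy)
    have hd : ¬ (x ∈ S1 ∧ x ∈ S0) := by
      rintro ⟨h1, h0⟩
      exact Finset.disjoint_left.mp hdisj01 h0 h1
    by_cases hx1 : x ∈ S1
    · rw [if_pos hx1] at hc1
      have hx0 : x ∉ S0 := fun h => hd ⟨hx1, h⟩
      rw [if_neg hx0] at hc2
      omega
    · rw [if_neg hx1] at hc1
      by_cases hx0 : x ∈ S0
      · rw [if_pos hx0] at hc2; omega
      · rw [if_neg hx0] at hc2; omega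
end

section
/- Let ∅ ⊂ S ⊂ X ⊆ 𝒱 with |S| = k, in a finite metric space (𝒱,d) with input point set V ⊆ 𝒱. If S is locally optimal with respect to X and V (i.e., cl(S + y − x) ≥ cl(S) for every swap (x,y) ∈ S × X), then cl(S) ≤ cl(X) + 6·OPT_k^𝒱(V), where OPT_k^𝒱(V) := min over T ⊆ 𝒱 with |T| = k of cl(T, V). -/
open Finset

lemma aux_infEdist_eq {𝒱 : Type*} [PseudoEMetricSpace 𝒱] (F : Finset 𝒱) (z m : 𝒱)
    (hm : m ∈ F) (hmin : ∀ y ∈ F, edist z m ≤ edist z y) :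
    EMetric.infEdist z (F : Set 𝒱) = edist z m := by
  refine le_antisymm (EMetric.infEdist_le_edist_of_mem (by exact_mod_cast hm)) ?_
  refine EMetric.le_infEdist.2 ?_
  intro y hy
  exact hmin y (by exact_mod_cast hy)

lemma aux_count {α : Type*} [DecidableEq α] (S O : Finset α) (π : α → α)
    (hπ : ∀ o ∈ O, π o ∈ S) (hcard : O.card = S.card) :
    (O \ O.filter (fun o => (O.filter (fun o' => π o' = π o)).card = 1)).card
      ≤ 2 * (S.filter (fun s => (O.filter (fun o' => π o' = s)).card = 0)).card := by
  set fib : α → Finset α := fun s => O.filter (fun o' => π o' = s) with hfib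
  set S0 := S.filter (fun s => (fib s).card = 0) with hS0
  set S1 := S.filter (fun s => (fib s).card = 1) with hS1
  set S2 := S.filter (fun s => 2 ≤ (fib s).card) with hS2
  set D := O.filter (fun o => (fib (π o)).card = 1) with hD
  have hmemfib : ∀ o ∈ O, o ∈ fib (π o) := by
    intro o ho; simp [hfib, ho]
  -- S.card = S0 + S1 + S2
  have hScard : S.card = S0.card + S1.card + S2.card := by
    have h01 : Disjoint S0 S1 := disjoint_left.mpr (by
      intro s h0 h1
      have a0 := (mem_filter.mp h0).2
      have a1 := (mem_filter.mp h1).2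
      omega)
    have h02 : Disjoint S0 S2 := disjoint_left.mpr (by
      intro s h0 h1
      have a0 := (mem_filter.mp h0).2
      have a1 := (mem_filter.mp h1).2
      omega)
    have h12 : Disjoint S1 S2 := disjoint_left.mpr (by
      intro s h0 h1
      have a0 := (mem_filter.mp h0).2
      have a1 := (mem_filter.mp h1).2
      omega)
    have h012 : Disjoint (S0 ∪ S1) S2 := disjoint_union_left.mpr ⟨h02, h12⟩
    have hun : S0 ∪ S1 ∪ S2 = S := by
      ext s
      simp only [mem_union, hS0, hS1, hS2, mem_filter]
      constructor
      · rintro ((⟨h, _⟩ | ⟨h, _⟩) | ⟨h, _⟩) <;> exact h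
      · intro h
        have h3 : (fib s).card = 0 ∨ (fib s).card = 1 ∨ 2 ≤ (fib s).card := by omega
        rcases h3 with h3 | h3 | h3
        · exact Or.inl (Or.inl ⟨h, h3⟩)
        · exact Or.inl (Or.inr ⟨h, h3⟩)
        · exact Or.inr ⟨h, h3⟩
    calc S.card = (S0 ∪ S1 ∪ S2).card := by rw [hun]
      _ = (S0 ∪ S1).card + S2.card := card_union_of_disjoint h012
      _ = S0.card + S1.card + S2.card := by rw [card_union_of_disjoint h01]
  -- D.card = S1.card
  have hDmaps : ∀ o ∈ D, π o ∈ S1 := by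
    intro o ho
    rw [hD, mem_filter] at ho
    exact mem_filter.mpr ⟨hπ o ho.1, ho.2⟩
  have hDfib : ∀ s ∈ S1, D.filter (fun o => π o = s) = fib s := by
    intro s hs
    have hs2 := (mem_filter.mp hs).2
    ext o
    simp only [mem_filter, hD, hfib]
    constructor
    · rintro ⟨⟨ho, _⟩, hos⟩; exact ⟨ho, hos⟩
    · rintro ⟨ho, hos⟩
      exact ⟨⟨ho, by rw [hos]; exact hs2⟩, hos⟩
  have hDcard : D.card = S1.card := by
    rw [card_eq_sum_card_fiberwise hDmaps]
    rw [Finset.sum_congr rfl (fun s hs => by rw [hDfib s hs])]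
    have h1 : ∀ s ∈ S1, (fib s).card = 1 := fun s hs => (mem_filter.mp hs).2
    rw [Finset.sum_congr rfl h1, Finset.sum_const, smul_eq_mul, mul_one]
  -- (O \ D).card = sum over S2 fibers
  have hODmaps : ∀ o ∈ O \ D, π o ∈ S2 := by
    intro o ho
    rw [mem_sdiff] at ho
    obtain ⟨ho, hnd⟩ := ho
    rw [hD, mem_filter] at hnd
    push_neg at hnd
    have h1 : 1 ≤ (fib (π o)).card := card_pos.mpr ⟨o, hmemfib o ho⟩
    have h2 := hnd ho
    exact mem_filter.mpr ⟨hπ o ho, by omega⟩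
  have hODfib : ∀ s ∈ S2, (O \ D).filter (fun o => π o = s) = fib s := by
    intro s hs
    have hs2 := (mem_filter.mp hs).2
    simp only [hfib] at hs2
    ext o
    simp only [mem_filter, mem_sdiff, hD, hfib]
    constructor
    · rintro ⟨⟨ho, _⟩, hos⟩; exact ⟨ho, hos⟩
    · rintro ⟨ho, hos⟩
      refine ⟨⟨ho, ?_⟩, hos⟩
      rintro ⟨_, h1⟩
      rw [hos] at h1
      omega
  have hODcard : (O \ D).card = ∑ s ∈ S2, (fib s).card := by
    rw [card_eq_sum_card_fiberwise hODmaps]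
    exact Finset.sum_congr rfl (fun s hs => by rw [hODfib s hs])
  have hODge : 2 * S2.card ≤ (O \ D).card := by
    rw [hODcard]
    calc 2 * S2.card = ∑ _s ∈ S2, 2 := by rw [Finset.sum_const, smul_eq_mul, mul_comm]
      _ ≤ ∑ s ∈ S2, (fib s).card := Finset.sum_le_sum (fun s hs => (mem_filter.mp hs).2)
  have hOsplit : (O \ D).card + D.card = O.card := card_sdiff_add_card_eq_card (filter_subset _ _)
  omega

/-- Approximation guarantee of local search for restricted `k`-median: if `S ⊂ X` with
`|S| = k` is locally optimal w.r.t. swaps `(x,y) ∈ S × X`, then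
`cl(S) ≤ cl(X) + 6·OPT_k^𝒱(V)`, where centers may be chosen anywhere in `𝒱` but
cost is measured over the client set `V`. -/
theorem stmt7 {𝒱 : Type*} [Fintype 𝒱] [DecidableEq 𝒱] [MetricSpace 𝒱]
    (V S X : Finset 𝒱) (k : ℕ)
    (hS : S.Nonempty) (hSX : S ⊂ X) (hScard : S.card = k)
    (hlocal : ∀ x ∈ S, ∀ y ∈ X,
      (∑ z ∈ V, EMetric.infEdist z ((S : Finset 𝒱) : Set 𝒱))
        ≤ ∑ z ∈ V, EMetric.infEdist z (((insert y S).erase x : Finset 𝒱) : Set 𝒱)) :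
    (∑ z ∈ V, EMetric.infEdist z ((S : Finset 𝒱) : Set 𝒱))
      ≤ (∑ z ∈ V, EMetric.infEdist z ((X : Finset 𝒱) : Set 𝒱))
        + 6 * (⨅ T ∈ {T : Finset 𝒱 | T.card = k},
            ∑ z ∈ V, EMetric.infEdist z ((T : Finset 𝒱) : Set 𝒱)) := by
  classical
  have hk1 : 1 ≤ k := hScard ▸ Finset.card_pos.mpr hS
  have hX : X.Nonempty := hS.mono hSX.subset
  -- an optimal solution O
  obtain ⟨O, hOk, hOmin⟩ : ∃ O : Finset 𝒱, O.card = k ∧ ∀ T : Finset 𝒱, T.card = k →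
      (∑ z ∈ V, EMetric.infEdist z (O : Set 𝒱)) ≤ ∑ z ∈ V, EMetric.infEdist z (T : Set 𝒱) := by
    obtain ⟨O, hO, hmin⟩ := Finset.exists_min_image
      ((Finset.univ : Finset (Finset 𝒱)).filter (fun T => T.card = k))
      (fun T => ∑ z ∈ V, EMetric.infEdist z (T : Set 𝒱)) ⟨S, by simp [hScard]⟩
    exact ⟨O, (mem_filter.mp hO).2, fun T hT => hmin T (mem_filter.mpr ⟨mem_univ T, hT⟩)⟩
  have hOne : O.Nonempty := card_pos.mp (hOk ▸ hk1)
  -- nearest point maps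
  choose sN hsN hsNmin using fun z => Finset.exists_min_image S (fun y => edist z y) hS
  choose oN hoN hoNmin using fun z => Finset.exists_min_image O (fun y => edist z y) hOne
  choose xN hxN hxNmin using fun z => Finset.exists_min_image X (fun y => edist z y) hX
  have hSeq : ∀ z, EMetric.infEdist z (S : Set 𝒱) = edist z (sN z) :=
    fun z => aux_infEdist_eq S z _ (hsN z) (hsNmin z)
  have hOeq : ∀ z, EMetric.infEdist z (O : Set 𝒱) = edist z (oN z) :=
    fun z => aux_infEdist_eq O z _ (hoN z) (hoNmin z)
  have hXeq : ∀ z, EMetric.infEdist z (X : Set 𝒱) = edist z (xN z) :=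
    fun z => aux_infEdist_eq X z _ (hxN z) (hxNmin z)
  set Cs : 𝒱 → ENNReal := fun x => ∑ z ∈ V.filter (fun z => sN z = x), 2 * edist z (oN z) with hCsdef
  -- key single-swap inequality
  have key : ∀ o ∈ O, ∀ x ∈ S, (∀ o'' ∈ O, sN o'' = x → o'' = o) →
      ∑ z ∈ V.filter (fun z => oN z = o), edist z (sN z)
        ≤ (∑ z ∈ V.filter (fun z => oN z = o), (2 * edist z (oN z) + edist z (xN z))) + Cs x := by
    intro o ho x hx hfib
    set y := xN o with hy
    have hyX : y ∈ X := hxN o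
    have hbnd : ∀ z, oN z = o → edist z y ≤ 2 * edist z (oN z) + edist z (xN z) := by
      intro z hz
      calc edist z y ≤ edist z o + edist o y := edist_triangle _ _ _
        _ ≤ edist z o + edist o (xN z) := add_le_add_right (hy ▸ hxNmin o (xN z) (hxN z)) _
        _ ≤ edist z o + (edist o z + edist z (xN z)) := add_le_add_right (edist_triangle _ _ _) _
        _ = 2 * edist z (oN z) + edist z (xN z) := by rw [← hz, edist_comm z (oN z)]; ring
    by_cases hyx : y = x
    · refine le_trans (Finset.sum_le_sum ?_) le_self_add
      intro z hz
      have hz' := (mem_filter.mp hz).2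
      calc edist z (sN z) ≤ edist z x := hsNmin z x hx
        _ = edist z y := by rw [hyx]
        _ ≤ _ := hbnd z hz'
    · have hloc := hlocal x hx y hyX
      set g : 𝒱 → ENNReal := fun z =>
        if oN z = o then 2 * edist z (oN z) + edist z (xN z)
        else if sN z = x then 2 * edist z (oN z) + edist z (sN z)
        else edist z (sN z) with hg
      have hpt : ∀ z ∈ V,
          EMetric.infEdist z (((insert y S).erase x : Finset 𝒱) : Set 𝒱) ≤ g z := by
        intro z _
        simp only [hg]
        split_ifs with h1 h2
        · refine le_trans (EMetric.infEdist_le_edist_of_mem ?_) (hbnd z h1)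
          exact_mod_cast Finset.mem_erase.mpr ⟨hyx, Finset.mem_insert_self y S⟩
        · have hp : sN (oN z) ∈ (insert y S).erase x := by
            refine Finset.mem_erase.mpr ⟨?_, Finset.mem_insert_of_mem (hsN (oN z))⟩
            intro hcon
            exact h1 (hfib (oN z) (hoN z) hcon)
          refine le_trans (EMetric.infEdist_le_edist_of_mem (by exact_mod_cast hp)) ?_
          calc edist z (sN (oN z))
              ≤ edist z (oN z) + edist (oN z) (sN (oN z)) := edist_triangle _ _ _
            _ ≤ edist z (oN z) + edist (oN z) (sN z) :=
                add_le_add_right (hsNmin (oN z) (sN z) (hsN z)) _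
            _ ≤ edist z (oN z) + (edist (oN z) z + edist z (sN z)) :=
                add_le_add_right (edist_triangle _ _ _) _
            _ = 2 * edist z (oN z) + edist z (sN z) := by rw [edist_comm (oN z) z]; ring
        · have hp : sN z ∈ (insert y S).erase x :=
            Finset.mem_erase.mpr ⟨h2, Finset.mem_insert_of_mem (hsN z)⟩
          exact EMetric.infEdist_le_edist_of_mem (by exact_mod_cast hp)
      have hsum : ∑ z ∈ V, edist z (sN z) ≤ ∑ z ∈ V, g z :=
        calc ∑ z ∈ V, edist z (sN z) = ∑ z ∈ V, EMetric.infEdist z (S : Set 𝒱) :=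
              Finset.sum_congr rfl (fun z _ => (hSeq z).symm)
          _ ≤ _ := hloc
          _ ≤ ∑ z ∈ V, g z := Finset.sum_le_sum hpt
      have hRfin : (∑ z ∈ V.filter (fun z => ¬ oN z = o), edist z (sN z)) ≠ ⊤ :=
        (ENNReal.sum_lt_top.mpr (fun z _ => (edist_lt_top z (sN z)))).ne
      have hgR : ∑ z ∈ V.filter (fun z => ¬ oN z = o), g z
          ≤ (∑ z ∈ V.filter (fun z => ¬ oN z = o), edist z (sN z)) + Cs x := by
        calc ∑ z ∈ V.filter (fun z => ¬ oN z = o), g z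
            ≤ ∑ z ∈ V.filter (fun z => ¬ oN z = o),
                (edist z (sN z) + if sN z = x then 2 * edist z (oN z) else 0) := by
              refine Finset.sum_le_sum (fun z hz => ?_)
              have hz1 : ¬ oN z = o := (mem_filter.mp hz).2
              simp only [hg]
              rw [if_neg hz1]
              split_ifs with h2
              · exact le_of_eq (add_comm _ _)
              · simp
          _ = (∑ z ∈ V.filter (fun z => ¬ oN z = o), edist z (sN z))
                + ∑ z ∈ V.filter (fun z => ¬ oN z = o),
                    (if sN z = x then 2 * edist z (oN z) else 0) := Finset.sum_add_distrib
          _ ≤ (∑ z ∈ V.filter (fun z => ¬ oN z = o), edist z (sN z))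
                + ∑ z ∈ V, (if sN z = x then 2 * edist z (oN z) else 0) :=
              add_le_add_right (Finset.sum_le_sum_of_subset (filter_subset _ _)) _
          _ = _ := by
              congr 1
              simp only [hCsdef]
              exact (Finset.sum_filter _ _).symm
      have hgL : ∑ z ∈ V.filter (fun z => oN z = o), g z
          = ∑ z ∈ V.filter (fun z => oN z = o), (2 * edist z (oN z) + edist z (xN z)) :=
        Finset.sum_congr rfl (fun z hz => by
          simp only [hg]; rw [if_pos (mem_filter.mp hz).2])
      have final : (∑ z ∈ V.filter (fun z => oN z = o), edist z (sN z))
            + (∑ z ∈ V.filter (fun z => ¬ oN z = o), edist z (sN z))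
          ≤ ((∑ z ∈ V.filter (fun z => oN z = o), (2 * edist z (oN z) + edist z (xN z))) + Cs x)
            + (∑ z ∈ V.filter (fun z => ¬ oN z = o), edist z (sN z)) := by
        calc (∑ z ∈ V.filter (fun z => oN z = o), edist z (sN z))
              + (∑ z ∈ V.filter (fun z => ¬ oN z = o), edist z (sN z))
            = ∑ z ∈ V, edist z (sN z) :=
              Finset.sum_filter_add_sum_filter_not V (fun z => oN z = o) _
          _ ≤ ∑ z ∈ V, g z := hsum
          _ = (∑ z ∈ V.filter (fun z => oN z = o), g z)
                + ∑ z ∈ V.filter (fun z => ¬ oN z = o), g z :=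
              (Finset.sum_filter_add_sum_filter_not V (fun z => oN z = o) g).symm
          _ ≤ (∑ z ∈ V.filter (fun z => oN z = o), (2 * edist z (oN z) + edist z (xN z)))
                + ((∑ z ∈ V.filter (fun z => ¬ oN z = o), edist z (sN z)) + Cs x) := by
              rw [hgL]; exact add_le_add_right hgR _
          _ = _ := by ring
      exact (ENNReal.add_le_add_iff_right hRfin).mp final
  -- the pairing construction
  set D := O.filter (fun o => (O.filter (fun o' => sN o' = sN o)).card = 1) with hDdef
  set S0 := S.filter (fun s => (O.filter (fun o' => sN o' = s)).card = 0) with hS0def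
  have hcount : (O \ D).card ≤ 2 * S0.card :=
    aux_count S O sN (fun o _ => hsN o) (hOk.trans hScard.symm)
  have hS0ne : (O \ D).Nonempty → S0.Nonempty := by
    intro h
    have h1 : 1 ≤ (O \ D).card := card_pos.mpr h
    exact card_pos.mp (by omega)
  obtain ⟨sstar, hsstar⟩ : ∃ s', (O \ D).Nonempty → s' ∈ S0 ∧ ∀ s ∈ S0, Cs s' ≤ Cs s := by
    by_cases h : (O \ D).Nonempty
    · obtain ⟨m, hm, hmin⟩ := Finset.exists_min_image S0 Cs (hS0ne h)
      exact ⟨m, fun _ => ⟨hm, hmin⟩⟩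
    · exact ⟨hS.choose, fun hne => absurd hne h⟩
  set σ : 𝒱 → 𝒱 := fun o => if o ∈ D then sN o else sstar with hσ
  have keyall : ∀ o ∈ O, ∑ z ∈ V.filter (fun z => oN z = o), edist z (sN z)
      ≤ (∑ z ∈ V.filter (fun z => oN z = o), (2 * edist z (oN z) + edist z (xN z)))
        + Cs (σ o) := by
    intro o ho
    by_cases hD : o ∈ D
    · have h1 : (O.filter (fun o' => sN o' = sN o)).card = 1 := (mem_filter.mp hD).2
      have hfib : ∀ o'' ∈ O, sN o'' = sN o → o'' = o := by
        intro o'' ho'' he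
        obtain ⟨a, ha⟩ := Finset.card_eq_one.mp h1
        have h2 : o'' ∈ O.filter (fun o' => sN o' = sN o) := mem_filter.mpr ⟨ho'', he⟩
        have h3 : o ∈ O.filter (fun o' => sN o' = sN o) := mem_filter.mpr ⟨ho, rfl⟩
        rw [ha, mem_singleton] at h2 h3
        rw [h2, h3]
      have hkey := key o ho (sN o) (hsN o) hfib
      have hσo : σ o = sN o := by rw [hσ]; exact if_pos hD
      rwa [hσo]
    · have hmem : o ∈ O \ D := mem_sdiff.mpr ⟨ho, hD⟩
      obtain ⟨hs0, _⟩ := hsstar ⟨o, hmem⟩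
      have hs0' := mem_filter.mp hs0
      have hfib : ∀ o'' ∈ O, sN o'' = sstar → o'' = o := by
        intro o'' ho'' he
        exfalso
        have hmem2 : o'' ∈ O.filter (fun o' => sN o' = sstar) := mem_filter.mpr ⟨ho'', he⟩
        rw [Finset.card_eq_zero.mp hs0'.2] at hmem2
        exact absurd hmem2 (notMem_empty _)
      have hkey := key o ho sstar hs0'.1 hfib
      have hσo : σ o = sstar := by rw [hσ]; exact if_neg hD
      rwa [hσo]
  -- summing over O
  have hstep1 : ∑ z ∈ V, edist z (sN z)
      ≤ (∑ o ∈ O, ∑ z ∈ V.filter (fun z => oN z = o), (2 * edist z (oN z) + edist z (xN z)))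
        + ∑ o ∈ O, Cs (σ o) := by
    calc ∑ z ∈ V, edist z (sN z)
        = ∑ o ∈ O, ∑ z ∈ V.filter (fun z => oN z = o), edist z (sN z) :=
          (Finset.sum_fiberwise_of_maps_to (fun z _ => hoN z) _).symm
      _ ≤ ∑ o ∈ O, ((∑ z ∈ V.filter (fun z => oN z = o), (2 * edist z (oN z) + edist z (xN z)))
            + Cs (σ o)) := Finset.sum_le_sum keyall
      _ = _ := Finset.sum_add_distrib
  have hB : ∑ o ∈ O, ∑ z ∈ V.filter (fun z => oN z = o), (2 * edist z (oN z) + edist z (xN z))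
      = ∑ z ∈ V, (2 * edist z (oN z) + edist z (xN z)) :=
    Finset.sum_fiberwise_of_maps_to (fun z _ => hoN z) _
  have hCtot : ∑ s ∈ S, Cs s = ∑ z ∈ V, 2 * edist z (oN z) := by
    simp only [hCsdef]
    exact Finset.sum_fiberwise_of_maps_to (fun z _ => hsN z) _
  -- bounding the Cs part
  have hDpart : ∑ o ∈ D, Cs (σ o) ≤ ∑ s ∈ S \ S0, Cs s := by
    have hmaps : ∀ o ∈ D, sN o ∈ S \ S0 := by
      intro o ho
      have h1 : (O.filter (fun o' => sN o' = sN o)).card = 1 := (mem_filter.mp ho).2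
      refine mem_sdiff.mpr ⟨hsN o, ?_⟩
      intro hcon
      have h0 := (mem_filter.mp hcon).2
      omega
    have hval : ∀ o ∈ D, Cs (σ o) = Cs (sN o) := by
      intro o ho
      rw [hσ]
      simp only [if_pos ho]
    calc ∑ o ∈ D, Cs (σ o) = ∑ o ∈ D, Cs (sN o) := Finset.sum_congr rfl hval
      _ = ∑ s ∈ S \ S0, ∑ o ∈ D.filter (fun o => sN o = s), Cs (sN o) :=
          (Finset.sum_fiberwise_of_maps_to hmaps _).symm
      _ ≤ ∑ s ∈ S \ S0, Cs s := by
          refine Finset.sum_le_sum (fun s hs => ?_)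
          have hcard1 : (D.filter (fun o => sN o = s)).card ≤ 1 := by
            refine Finset.card_le_one.mpr (fun a ha b hb => ?_)
            have ha' := mem_filter.mp ha
            have hb' := mem_filter.mp hb
            have haD := mem_filter.mp ha'.1
            obtain ⟨c, hc⟩ := Finset.card_eq_one.mp haD.2
            have h2 : a ∈ O.filter (fun o' => sN o' = sN a) :=
              mem_filter.mpr ⟨haD.1, rfl⟩
            have h3 : b ∈ O.filter (fun o' => sN o' = sN a) :=
              mem_filter.mpr ⟨(mem_filter.mp hb'.1).1, by rw [hb'.2, ha'.2]⟩
            rw [hc, mem_singleton] at h2 h3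
            rw [h2, h3]
          calc ∑ o ∈ D.filter (fun o => sN o = s), Cs (sN o)
              = ∑ _o ∈ D.filter (fun o => sN o = s), Cs s :=
                Finset.sum_congr rfl (fun o ho => by rw [(mem_filter.mp ho).2])
            _ = (D.filter (fun o => sN o = s)).card • Cs s := Finset.sum_const _
            _ = ((D.filter (fun o => sN o = s)).card : ENNReal) * Cs s := nsmul_eq_mul _ _
            _ ≤ 1 * Cs s := mul_le_mul_left (by exact_mod_cast hcard1) _
            _ = Cs s := one_mul _
  have hODpart : ∑ o ∈ O \ D, Cs (σ o) ≤ 2 * ∑ s ∈ S0, Cs s := by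
    rcases (O \ D).eq_empty_or_nonempty with he | hne
    · rw [he]; simp
    · obtain ⟨hs0mem, hs0min⟩ := hsstar hne
      have hval : ∀ o ∈ O \ D, Cs (σ o) = Cs sstar := by
        intro o ho
        rw [hσ]
        simp only [if_neg (mem_sdiff.mp ho).2]
      calc ∑ o ∈ O \ D, Cs (σ o) = (O \ D).card • Cs sstar := by
            rw [Finset.sum_congr rfl hval, Finset.sum_const]
        _ = (((O \ D).card : ℕ) : ENNReal) * Cs sstar := nsmul_eq_mul _ _
        _ ≤ ((2 * S0.card : ℕ) : ENNReal) * Cs sstar :=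
            mul_le_mul_left (by exact_mod_cast hcount) _
        _ = 2 * (((S0.card : ℕ) : ENNReal) * Cs sstar) := by push_cast; ring
        _ = 2 * ∑ _s ∈ S0, Cs sstar := by rw [← nsmul_eq_mul, ← Finset.sum_const]
        _ ≤ 2 * ∑ s ∈ S0, Cs s :=
            mul_le_mul_right (Finset.sum_le_sum (fun s hs => hs0min s hs)) _
  have hσtot : ∑ o ∈ O, Cs (σ o) ≤ 2 * ∑ s ∈ S, Cs s := by
    have hsplit : (∑ o ∈ O \ D, Cs (σ o)) + ∑ o ∈ D, Cs (σ o) = ∑ o ∈ O, Cs (σ o) :=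
      Finset.sum_sdiff (filter_subset _ _)
    have hSsplit : (∑ s ∈ S \ S0, Cs s) + ∑ s ∈ S0, Cs s = ∑ s ∈ S, Cs s :=
      Finset.sum_sdiff (filter_subset _ _)
    calc ∑ o ∈ O, Cs (σ o) = (∑ o ∈ O \ D, Cs (σ o)) + ∑ o ∈ D, Cs (σ o) := hsplit.symm
      _ ≤ (2 * ∑ s ∈ S0, Cs s) + ∑ s ∈ S \ S0, Cs s := add_le_add hODpart hDpart
      _ ≤ (2 * ∑ s ∈ S0, Cs s) + 2 * ∑ s ∈ S \ S0, Cs s := by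
          refine add_le_add_right ?_ _
          calc ∑ s ∈ S \ S0, Cs s = 1 * ∑ s ∈ S \ S0, Cs s := (one_mul _).symm
            _ ≤ 2 * ∑ s ∈ S \ S0, Cs s := mul_le_mul_left one_le_two _
      _ = 2 * ((∑ s ∈ S \ S0, Cs s) + ∑ s ∈ S0, Cs s) := by ring
      _ = 2 * ∑ s ∈ S, Cs s := by rw [hSsplit]
  have e1 : ∑ z ∈ V, (2 * edist z (oN z) + edist z (xN z))
      = 2 * (∑ z ∈ V, edist z (oN z)) + ∑ z ∈ V, edist z (xN z) := by
    rw [Finset.sum_add_distrib, ← Finset.mul_sum]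
  have main : ∑ z ∈ V, edist z (sN z)
      ≤ (∑ z ∈ V, edist z (xN z)) + 6 * ∑ z ∈ V, edist z (oN z) := by
    calc ∑ z ∈ V, edist z (sN z)
        ≤ (∑ z ∈ V, (2 * edist z (oN z) + edist z (xN z))) + ∑ o ∈ O, Cs (σ o) := by
          rw [← hB]; exact hstep1
      _ ≤ (∑ z ∈ V, (2 * edist z (oN z) + edist z (xN z))) + 2 * ∑ s ∈ S, Cs s :=
          add_le_add_right hσtot _
      _ = (∑ z ∈ V, edist z (xN z)) + 6 * ∑ z ∈ V, edist z (oN z) := by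
          rw [e1, hCtot, ← Finset.mul_sum]; ring
  calc ∑ z ∈ V, EMetric.infEdist z (S : Set 𝒱) = ∑ z ∈ V, edist z (sN z) :=
        Finset.sum_congr rfl (fun z _ => hSeq z)
    _ ≤ (∑ z ∈ V, edist z (xN z)) + 6 * ∑ z ∈ V, edist z (oN z) := main
    _ = (∑ z ∈ V, EMetric.infEdist z (X : Set 𝒱))
          + 6 * ∑ z ∈ V, EMetric.infEdist z (O : Set 𝒱) := by
        rw [Finset.sum_congr rfl (fun z (_ : z ∈ V) => (hXeq z).symm),
            Finset.sum_congr rfl (fun z (_ : z ∈ V) => (hOeq z).symm)]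
    _ ≤ _ := add_le_add_right (mul_le_mul_right (le_iInf₂ (fun T hT => hOmin T hT)) 6) _
end

section
/- For every integer p ≥ 1, real x ≥ 0, and 0 ≤ ε < 1, the inequality (1−ε)^p·(1+2x)^p + 2·(1 + 6px + 2(1−ε)x)^p ≤ (3−ε)·(1+6px)^p holds. -/
/-- Truncated binomial lower bound: for `t ∈ [0,1]`,
`(1-t)^n ≥ 1 - n t + (n(n-1)/2) t² - (n(n-1)(n-2)/6) t³`. -/
lemma my_trunc (t : ℝ) (ht0 : 0 ≤ t) (ht1 : t ≤ 1) : ∀ n : ℕ,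
    1 - (n:ℝ)*t + ((n:ℝ)*((n:ℝ)-1)/2)*t^2 - ((n:ℝ)*((n:ℝ)-1)*((n:ℝ)-2)/6)*t^3 ≤ (1-t)^n := by
  intro n
  induction n with
  | zero => norm_num
  | succ n ih =>
    have hb : 0 ≤ (n:ℝ)*((n:ℝ)-1)*((n:ℝ)-2)/6 := by
      rcases n with _|_|m
      · norm_num
      · norm_num
      · have hm : (0:ℝ) ≤ (m:ℝ) := Nat.cast_nonneg m
        push_cast
        nlinarith [mul_nonneg (mul_nonneg (by linarith : (0:ℝ) ≤ (m:ℝ)+2)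
          (by linarith : (0:ℝ) ≤ (m:ℝ)+1)) hm]
    have h1t : 0 ≤ 1 - t := by linarith
    have h1 := mul_le_mul_of_nonneg_left ih h1t
    have h2 : 0 ≤ ((n:ℝ)*((n:ℝ)-1)*((n:ℝ)-2)/6) * t^4 :=
      mul_nonneg hb (pow_nonneg ht0 4)
    push_cast
    calc 1 - ((n:ℝ)+1)*t + (((n:ℝ)+1)*(((n:ℝ)+1)-1)/2)*t^2 - (((n:ℝ)+1)*(((n:ℝ)+1)-1)*(((n:ℝ)+1)-2)/6)*t^3
        = (1-t) * (1 - (n:ℝ)*t + ((n:ℝ)*((n:ℝ)-1)/2)*t^2 - ((n:ℝ)*((n:ℝ)-1)*((n:ℝ)-2)/6)*t^3)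
          - ((n:ℝ)*((n:ℝ)-1)*((n:ℝ)-2)/6) * t^4 := by ring
      _ ≤ (1-t) * (1-t)^n := by linarith
      _ = (1-t)^(n+1) := by rw [pow_succ]; ring

set_option maxHeartbeats 1000000 in
/-- Coefficient-wise inequality. -/
lemma my_coeff (p i : ℕ) (hp : 2 ≤ p) (hi : i ≤ p) (c : ℝ) (hc0 : 0 < c) (hc1 : c ≤ 1) :
    c^p * 2^i + 2*(6*(p:ℝ) + 2*c)^i ≤ (2+c)*(6*(p:ℝ))^i := by
  have hP : (2:ℝ) ≤ (p:ℝ) := by exact_mod_cast hp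
  have hP0 : (0:ℝ) < (p:ℝ) := by linarith
  have hcp1 : c^p ≤ c := by
    calc c^p ≤ c^1 := pow_le_pow_of_le_one hc0.le hc1 (le_trans (by norm_num) hp)
    _ = c := pow_one c
  match i, hi with
  | 0, _ => simpa using by linarith [hcp1]
  | 1, _ =>
    simp only [pow_one]
    nlinarith [hcp1, hc0.le]
  | (Nat.succ (Nat.succ j)), hi =>
    set i := j + 2 with hidef
    have hi2 : 2 ≤ i := by omega
    -- c^p ≤ c^2
    have hcp2 : c^p ≤ c^2 := pow_le_pow_of_le_one hc0.le hc1 hp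
    -- 2^i * 36 ≤ (6p)^i
    have h36 : (2:ℝ)^i * 36 ≤ (6*(p:ℝ))^i := by
      have h12 : (12:ℝ)^i ≤ (6*(p:ℝ))^i := by
        apply pow_le_pow_left₀ (by norm_num)
        linarith
      have h6 : (36:ℝ) ≤ 6^i := by
        calc (36:ℝ) = 6^2 := by norm_num
        _ ≤ 6^i := pow_le_pow_right₀ (by norm_num) hi2
      calc (2:ℝ)^i * 36 ≤ 2^i * 6^i := by
            have : (0:ℝ) ≤ 2^i := by positivity
            nlinarith [this, h6]
      _ = 12^i := by rw [← mul_pow]; norm_num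
      _ ≤ (6*(p:ℝ))^i := h12
    set t : ℝ := c / (3*(p:ℝ)) with htdef
    have ht0 : 0 ≤ t := by positivity
    have ht1 : t ≤ 1 := by
      rw [htdef, div_le_one (by linarith)]
      linarith
    have htp : (6*(p:ℝ) + 2*c) = 6*(p:ℝ) * (1 + t) := by
      rw [htdef]; field_simp; ring
    -- (1-t²)^p ≤ 1
    have hsq : (1+t)^p * (1-t)^p ≤ 1 := by
      rw [← mul_pow]
      apply pow_le_one₀ (by nlinarith) (by nlinarith)
    -- truncation bound
    have htr := my_trunc t ht0 ht1 p
    set D : ℝ := 1 - c/3 + c^2/36 - c^3/162 with hDdef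
    have hED : D ≤ 1 - (p:ℝ)*t + ((p:ℝ)*((p:ℝ)-1)/2)*t^2 - ((p:ℝ)*((p:ℝ)-1)*((p:ℝ)-2)/6)*t^3 := by
      rw [hDdef, htdef]
      have e1 : (p:ℝ) * (c / (3*(p:ℝ))) = c/3 := by field_simp
      have e2 : ((p:ℝ)*((p:ℝ)-1)/2) * (c / (3*(p:ℝ)))^2 = ((p:ℝ)-1)*c^2/(18*(p:ℝ)) := by
        field_simp; ring
      have e3 : ((p:ℝ)*((p:ℝ)-1)*((p:ℝ)-2)/6) * (c / (3*(p:ℝ)))^3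
          = ((p:ℝ)-1)*((p:ℝ)-2)*c^3/(162*(p:ℝ)^2) := by
        field_simp; ring
      rw [e1, e2, e3]
      have i2 : c^2/36 ≤ ((p:ℝ)-1)*c^2/(18*(p:ℝ)) := by
        rw [div_le_div_iff₀ (by norm_num) (by linarith)]
        nlinarith [sq_nonneg c]
      have i3 : ((p:ℝ)-1)*((p:ℝ)-2)*c^3/(162*(p:ℝ)^2) ≤ c^3/162 := by
        rw [div_le_div_iff₀ (by positivity) (by norm_num)]
        nlinarith [pow_nonneg hc0.le 3, sq_nonneg (p:ℝ)]
      linarith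
    have hDle : D ≤ (1-t)^p := le_trans hED htr
    -- 2 ≤ (2 + c - c^2/36) * D
    have hpoly : 2 ≤ (2 + c - c^2/36) * D := by
      rw [hDdef]
      have hc3 : c^3 ≤ 1 := pow_le_one₀ hc0.le hc1
      have a1 : 0 ≤ c*(1-c) := mul_nonneg hc0.le (by linarith)
      have a2 : 0 ≤ c*(1-c^3) := mul_nonneg hc0.le (by linarith)
      have a3 : 0 ≤ c^3 := pow_nonneg hc0.le 3
      have a4 : 0 ≤ c^5 := pow_nonneg hc0.le 5
      nlinarith [a1, a2, a3, a4, hc0.le]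
    have h1tp : (0:ℝ) ≤ (1+t)^p := by positivity
    have hE : (2 + c - c^2/36) * D ≤ (2 + c - c^2/36) * (1-t)^p := by
      apply mul_le_mul_of_nonneg_left hDle
      nlinarith [sq_nonneg c]
    have hKey : 2 * (1+t)^p ≤ 2 + c - c^2/36 := by
      have h5 : 2 * (1+t)^p ≤ ((2 + c - c^2/36) * (1-t)^p) * (1+t)^p := by
        apply mul_le_mul_of_nonneg_right _ h1tp
        linarith
      have h6 : ((2 + c - c^2/36) * (1-t)^p) * (1+t)^p ≤ (2 + c - c^2/36) * 1 := by
        rw [mul_assoc, mul_comm ((1-t)^p)]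
        apply mul_le_mul_of_nonneg_left hsq
        nlinarith [sq_nonneg c]
      calc 2 * (1+t)^p ≤ ((2 + c - c^2/36) * (1-t)^p) * (1+t)^p := h5
      _ ≤ (2 + c - c^2/36) * 1 := h6
      _ = 2 + c - c^2/36 := mul_one _
    -- put it together
    have hmid : 2*(6*(p:ℝ) + 2*c)^i ≤ (2 + c - c^2/36) * (6*(p:ℝ))^i := by
      rw [htp, mul_pow]
      have hii : (1+t)^i ≤ (1+t)^p := pow_le_pow_right₀ (by linarith) hi
      have h6p : (0:ℝ) ≤ (6*(p:ℝ))^i := by positivity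
      calc 2*((6*(p:ℝ))^i * (1+t)^i) ≤ 2*((6*(p:ℝ))^i * (1+t)^p) := by
            apply mul_le_mul_of_nonneg_left _ (by norm_num)
            exact mul_le_mul_of_nonneg_left hii h6p
      _ = (2*(1+t)^p) * (6*(p:ℝ))^i := by ring
      _ ≤ (2 + c - c^2/36) * (6*(p:ℝ))^i := mul_le_mul_of_nonneg_right hKey h6p
    have hfirst : c^p * 2^i ≤ c^2/36 * (6*(p:ℝ))^i := by
      have h2i : (0:ℝ) ≤ 2^i := by positivity
      calc c^p * 2^i ≤ c^2 * 2^i := mul_le_mul_of_nonneg_right hcp2 h2i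
      _ ≤ c^2 * ((6*(p:ℝ))^i / 36) := by
          apply mul_le_mul_of_nonneg_left _ (sq_nonneg c)
          linarith
      _ = c^2/36 * (6*(p:ℝ))^i := by ring
    show c ^ p * 2 ^ i + 2 * (6 * (p:ℝ) + 2 * c) ^ i ≤ (2 + c) * (6 * (p:ℝ)) ^ i
    linarith

/-- Analytic inequality: for integers `p ≥ 1`, reals `x ≥ 0` and `0 ≤ ε < 1`,
`(1−ε)^p·(1+2x)^p + 2·(1 + 6px + 2(1−ε)x)^p ≤ (3−ε)·(1+6px)^p`. -/
theorem stmt11 (p : ℕ) (hp : 1 ≤ p) (x ε : ℝ) (hx : 0 ≤ x) (hε0 : 0 ≤ ε) (hε1 : ε < 1) :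
    (1 - ε) ^ p * (1 + 2 * x) ^ p + 2 * (1 + 6 * (p : ℝ) * x + 2 * (1 - ε) * x) ^ p
      ≤ (3 - ε) * (1 + 6 * (p : ℝ) * x) ^ p := by
  set c : ℝ := 1 - ε with hcdef
  have hc0 : 0 < c := by rw [hcdef]; linarith
  have hc1 : c ≤ 1 := by rw [hcdef]; linarith
  have h3 : (3:ℝ) - ε = 2 + c := by rw [hcdef]; ring
  rw [h3]
  rcases eq_or_lt_of_le hp with h1 | h2
  · -- p = 1
    subst h1
    simp only [pow_one, Nat.cast_one]
    nlinarith [hc0.le, hx]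
  · have hp2 : 2 ≤ p := h2
    rw [show (1:ℝ) + 2 * x = 2*x + 1 by ring,
        show (1:ℝ) + 6 * (p:ℝ) * x + 2 * c * x = (6*(p:ℝ) + 2*c)*x + 1 by ring,
        show (1:ℝ) + 6 * (p:ℝ) * x = (6*(p:ℝ))*x + 1 by ring,
        add_pow, add_pow, add_pow]
    simp only [one_pow, mul_one]
    rw [Finset.mul_sum, Finset.mul_sum, Finset.mul_sum, ← Finset.sum_add_distrib]
    apply Finset.sum_le_sum
    intro i hi
    have hi' : i ≤ p := Nat.lt_succ_iff.mp (Finset.mem_range.mp hi)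
    have hco := my_coeff p i hp2 hi' c hc0 hc1
    have hxi : (0:ℝ) ≤ x^i := pow_nonneg hx i
    have hC : (0:ℝ) ≤ (p.choose i : ℝ) := Nat.cast_nonneg _
    rw [mul_pow, mul_pow, mul_pow]
    nlinarith [mul_le_mul_of_nonneg_right hco (mul_nonneg hxi hC),
      mul_nonneg hxi hC]
end

section
/- Fix a finite weighted metric space (V, w, d) and λ > 0. For β ≥ 0 and i ∈ V define d^{(β)}(i,j) = β·d(i,j), B^{(β)}(i,r) = {j : d^{(β)}(i,j) ≤ r}, and r_i^{(β)} = min{r ≥ 0 : Σ_{j ∈ B^{(β)}(i,r)} w(j)(r − d^{(β)}(i,j)) ≥ λ}. Then for all i, i' ∈ V and β ≥ 0, r_i^{(β)} ≤ r_{i'}^{(β)} + d^{(β)}(i, i'). -/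
open Finset

/-- `coverage w d t` is the paper's `Σ_{j ∈ B(i,t)} w(j)(t − d(i,j))`, with `d = d(i, ·)`. -/
noncomputable def coverage {V : Type*} [Fintype V] (w d : V → ℝ) (t : ℝ) : ℝ :=
  ∑ j ∈ univ.filter (fun j => d j ≤ t), w j * (t - d j)

theorem coverage_le_coverage_add {V : Type*} [Fintype V] {w d d' : V → ℝ} {c : ℝ}
    (hw : ∀ j, 0 ≤ w j) (hd : ∀ j, d' j ≤ c + d j) (t : ℝ) :
    coverage w d t ≤ coverage w d' (t + c) := by
  unfold coverage
  calc ∑ j ∈ univ.filter (fun j => d j ≤ t), w j * (t - d j)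
      ≤ ∑ j ∈ univ.filter (fun j => d j ≤ t), w j * (t + c - d' j) :=
        sum_le_sum fun j _ => mul_le_mul_of_nonneg_left (by linarith [hd j]) (hw j)
    _ ≤ ∑ j ∈ univ.filter (fun j => d' j ≤ t + c), w j * (t + c - d' j) := by
        refine sum_le_sum_of_subset_of_nonneg ?_ fun j hj _ => ?_
        · intro j hj
          simp only [mem_filter, mem_univ, true_and] at hj ⊢
          linarith [hd j]
        · simp only [mem_filter, mem_univ, true_and] at hj
          exact mul_nonneg (hw j) (by linarith)

theorem stmt12_general {V : Type*} [Fintype V] [MetricSpace V]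
    (w : V → ℝ) (hw : ∀ j, 0 < w j) (lam : ℝ)
    (β : ℝ) (hβ : 0 ≤ β) (r : V → ℝ)
    (hr : ∀ i, IsLeast {t : ℝ | 0 ≤ t ∧
      lam ≤ ∑ j ∈ Finset.univ.filter (fun j => β * dist i j ≤ t), w j * (t - β * dist i j)} (r i))
    (i i' : V) :
    r i ≤ r i' + β * dist i i' := by
  obtain ⟨⟨hr'_nonneg, hr'_covers⟩, -⟩ := hr i'
  have hshift : ∀ j, β * dist i j ≤ β * dist i i' + β * dist i' j := fun j => by
    rw [← mul_add]
    exact mul_le_mul_of_nonneg_left (dist_triangle i i' j) hβ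
  refine (hr i).2 ⟨add_nonneg hr'_nonneg (mul_nonneg hβ dist_nonneg), ?_⟩
  exact hr'_covers.trans (coverage_le_coverage_add (fun j => (hw j).le) hshift (r i'))

/-- Lipschitz property of the Mettu–Plaxton radii:
`r_i^{(β)} ≤ r_{i'}^{(β)} + d^{(β)}(i, i')`. -/
theorem stmt12 {V : Type*} [Fintype V] [MetricSpace V]
    (w : V → ℝ) (hw : ∀ j, 0 < w j) (lam : ℝ) (hlam : 0 < lam)
    (β : ℝ) (hβ : 0 ≤ β) (r : V → ℝ)
    (hr : ∀ i, IsLeast {t : ℝ | 0 ≤ t ∧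
      lam ≤ ∑ j ∈ Finset.univ.filter (fun j => β * dist i j ≤ t), w j * (t - β * dist i j)} (r i))
    (i i' : V) :
    r i ≤ r i' + β * dist i i' :=
  stmt12_general w hw lam β hβ r hr i i'
end

section
/- Fix a finite weighted metric space (V, w, d) and λ > 0, and define r_j^{(β)} as above. Set ṽ_j := w(j)·r_j^{(1/2)} and w̃_{j→i} := max(0, w(j)·(r_j^{(1/2)} − d(i,j))). Then {ṽ_j, w̃_{j→i}} is a feasible solution of the dual LP for uniform facility location: (1) Σ_{j∈V} w̃_{j→i} ≤ λ for all i ∈ V; (2) ṽ_j ≤ w(j)·d(i,j) + w̃_{j→i} for all i, j ∈ V; (3) all variables are nonnegative. -/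
/-!
The map `t ↦ Σᵢ w(i)·(t − β·d(j,i))₊` is continuous and vanishes at `0`, so by the intermediate
value theorem its least crossing `r_j` of the level `λ ≥ 0` is hit exactly: `Σᵢ w(i)·(r_j − β·d(j,i))₊ = λ`.
By the triangle inequality the mass around `i` at radius `t` is at most the mass around `j` at
radius `t + β·d(i,j)`, whence `r_j ≤ r_i + β·d(i,j)`. For `β = 1/2` this gives
`r_j − d(i,j) ≤ r_i − d(i,j)/2`, so `Σⱼ (w(j)·(r_j − d(i,j)))₊ ≤ Σⱼ w(j)·(r_i − d(i,j)/2)₊ = λ`.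
-/

open Finset

theorem IsLeast.apply_eq_of_continuous {f : ℝ → ℝ} {c r : ℝ} (hf : Continuous f) (h0 : f 0 ≤ c)
    (hr : IsLeast {t | 0 ≤ t ∧ c ≤ f t} r) : f r = c := by
  obtain ⟨⟨hr0, hcr⟩, hleast⟩ := hr
  obtain ⟨s, ⟨hs0, hsr⟩, hs⟩ :=
    intermediate_value_Icc hr0 hf.continuousOn ⟨h0, hcr⟩
  have hrs : r ≤ s := hleast ⟨hs0, hs.ge⟩
  rwa [le_antisymm hsr hrs] at hs

section BallMass

variable {V : Type*} [Fintype V] [PseudoMetricSpace V]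

noncomputable def ballMass (w : V → ℝ) (β : ℝ) (j : V) (t : ℝ) : ℝ :=
  ∑ i, w i * max 0 (t - β * dist j i)

theorem sum_filter_eq_ballMass (w : V → ℝ) (β : ℝ) (j : V) (t : ℝ) :
    ∑ i ∈ univ.filter (fun i => β * dist j i ≤ t), w i * (t - β * dist j i) =
      ballMass w β j t := by
  rw [sum_filter, ballMass]
  refine sum_congr rfl fun i _ => ?_
  split_ifs with h
  · rw [max_eq_right (sub_nonneg.2 h)]
  · rw [max_eq_left (sub_neg.2 (not_le.1 h)).le, mul_zero]

theorem continuous_ballMass (w : V → ℝ) (β : ℝ) (j : V) : Continuous (ballMass w β j) := by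
  unfold ballMass
  fun_prop

theorem ballMass_zero (w : V → ℝ) {β : ℝ} (hβ : 0 ≤ β) (j : V) : ballMass w β j 0 = 0 :=
  sum_eq_zero fun i _ => by
    rw [max_eq_left (by nlinarith [dist_nonneg (x := j) (y := i)]), mul_zero]

theorem ballMass_le_ballMass_add_dist {w : V → ℝ} (hw : ∀ i, 0 ≤ w i) {β : ℝ} (hβ : 0 ≤ β)
    (i j : V) (t : ℝ) : ballMass w β i t ≤ ballMass w β j (t + β * dist i j) := by
  refine sum_le_sum fun k _ => mul_le_mul_of_nonneg_left (max_le_max le_rfl ?_) (hw k)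
  nlinarith [dist_triangle j i k, dist_comm j i]

variable {w : V → ℝ} {β lam : ℝ} {r : V → ℝ}

theorem ballMass_eq_of_isLeast (hβ : 0 ≤ β) (hlam : 0 ≤ lam) {j : V}
    (hr : IsLeast {t | 0 ≤ t ∧ lam ≤ ballMass w β j t} (r j)) : ballMass w β j (r j) = lam :=
  hr.apply_eq_of_continuous (continuous_ballMass w β j) (by rwa [ballMass_zero w hβ])

theorem le_add_dist_of_isLeast (hw : ∀ i, 0 ≤ w i) (hβ : 0 ≤ β)
    (hr : ∀ j, IsLeast {t | 0 ≤ t ∧ lam ≤ ballMass w β j t} (r j)) (i j : V) :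
    r j ≤ r i + β * dist i j :=
  (hr j).2 ⟨add_nonneg (hr i).1.1 (mul_nonneg hβ dist_nonneg),
    (hr i).1.2.trans (ballMass_le_ballMass_add_dist hw hβ i j (r i))⟩

end BallMass

/-- Dual feasibility: with `ṽ_j := w(j)·r_j^{(1/2)}` and
`w̃_{j→i} := max(0, w(j)·(r_j^{(1/2)} − d(i,j)))`, the pair `{ṽ_j, w̃_{j→i}}` is a feasible
solution of the dual LP for uniform facility location with opening cost `λ`. -/
theorem stmt14 {V : Type*} [Fintype V] [MetricSpace V]
    (w : V → ℝ) (hw : ∀ j, 0 < w j) (lam : ℝ) (hlam : 0 < lam)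
    (r : V → ℝ)
    (hr : ∀ j, IsLeast {t : ℝ | 0 ≤ t ∧
      lam ≤ ∑ i ∈ Finset.univ.filter (fun i => (1 / 2 : ℝ) * dist j i ≤ t),
        w i * (t - (1 / 2 : ℝ) * dist j i)} (r j)) :
    (∀ i : V, ∑ j : V, max 0 (w j * (r j - dist i j)) ≤ lam) ∧
    (∀ i j : V, w j * r j ≤ w j * dist i j + max 0 (w j * (r j - dist i j))) ∧
    (∀ j : V, 0 ≤ w j * r j) ∧
    (∀ i j : V, 0 ≤ max 0 (w j * (r j - dist i j))) := by
  simp only [sum_filter_eq_ballMass] at hr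
  have hw' : ∀ j, 0 ≤ w j := fun j => (hw j).le
  have hβ : (0 : ℝ) ≤ 1 / 2 := by norm_num
  refine ⟨fun i => ?_, fun i j => ?_, fun j => mul_nonneg (hw' j) (hr j).1.1,
    fun _ _ => le_max_left _ _⟩
  · calc ∑ j, max 0 (w j * (r j - dist i j))
        ≤ ∑ j, w j * max 0 (r i - 1 / 2 * dist i j) := by
          refine sum_le_sum fun j _ => ?_
          rw [mul_max_of_nonneg _ _ (hw' j), mul_zero]
          refine max_le_max le_rfl (mul_le_mul_of_nonneg_left ?_ (hw' j))
          linarith [le_add_dist_of_isLeast hw' hβ hr i j]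
      _ = lam := ballMass_eq_of_isLeast hβ hlam.le (hr i)
  · linarith [le_max_right 0 (w j * (r j - dist i j)), mul_sub (w j) (r j) (dist i j)]
end

section
/- Fix a finite set V*, weights w > 0 on V*, distances d(i,j) ≥ 0 from a distinguished point j, and λ > 0. Suppose Σ_{i∈V*} w(i)·(r − d(i,j)/2) = λ and Σ_{i∈V*} w(i)·(r* − d(i,j)/4) = λ, and define C* := (1/λ)·Σ_{i∈V*} w(i)·(r* − d(i,j)/4)·w(j)·d(i,j)/4. Then w(j)·r* + C* ≤ w(j)·r. -/
/-- If `Σ_{i∈V*} w(i)·(r − d(i,j)/2) = λ` and `Σ_{i∈V*} w(i)·(r* − d(i,j)/4) = λ`, then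
with `C* := (1/λ)·Σ_{i∈V*} w(i)·(r* − d(i,j)/4)·w(j)·d(i,j)/4` we have
`w(j)·r* + C* ≤ w(j)·r`. -/
theorem stmt15 {α : Type*} (Vstar : Finset α) (w D : α → ℝ)
    (hw : ∀ i ∈ Vstar, 0 < w i) (hD : ∀ i ∈ Vstar, 0 ≤ D i)
    (wj lam r rstar : ℝ) (hwj : 0 < wj) (hlam : 0 < lam)
    (h1 : ∑ i ∈ Vstar, w i * (r - D i / 2) = lam)
    (h2 : ∑ i ∈ Vstar, w i * (rstar - D i / 4) = lam) :
    wj * rstar + (1 / lam) * ∑ i ∈ Vstar, w i * (rstar - D i / 4) * (wj * D i / 4)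
      ≤ wj * r := by
  set m := ∑ i ∈ Vstar, w i with hm
  set S := ∑ i ∈ Vstar, w i * (D i / 4) with hS
  set Q := ∑ i ∈ Vstar, w i * (D i / 4) ^ 2 with hQ
  have hcs : S ^ 2 ≤ m * Q :=
    Finset.sum_sq_le_sum_mul_sum_of_sq_eq_mul Vstar
      (fun i hi => (hw i hi).le)
      (fun i hi => mul_nonneg (hw i hi).le (sq_nonneg _))
      (fun i hi => by ring)
  have hmpos : 0 < m := by
    rcases Vstar.eq_empty_or_nonempty with he | hne
    · exfalso; rw [he] at h2; simp at h2; linarith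
    · exact Finset.sum_pos (fun i hi => hw i hi) hne
  have e1 : m * r - 2 * S = lam := by
    simp only [hm, hS, Finset.sum_mul, Finset.mul_sum, ← Finset.sum_sub_distrib, ← h1]
    exact Finset.sum_congr rfl fun i hi => by ring
  have e2 : m * rstar - S = lam := by
    simp only [hm, hS, Finset.sum_mul, ← Finset.sum_sub_distrib, ← h2]
    exact Finset.sum_congr rfl fun i hi => by ring
  have e3 : ∑ i ∈ Vstar, w i * (rstar - D i / 4) * (wj * D i / 4)
      = wj * (rstar * S - Q) := by
    simp only [hS, hQ, mul_sub, Finset.mul_sum, ← Finset.sum_sub_distrib]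
    exact Finset.sum_congr rfl fun i hi => by ring
  rw [e3, one_div, inv_mul_eq_div]
  have key : wj * (rstar * S - Q) / lam ≤ wj * r - wj * rstar := by
    rw [div_le_iff₀ hlam]
    have e4 : m * r - m * rstar = S := by linarith
    rw [← mul_le_mul_iff_right₀ hmpos]
    have h5 : m * ((wj * r - wj * rstar) * lam) - m * (wj * (rstar * S - Q))
        = wj * (m * Q - S ^ 2) := by
      linear_combination wj * lam * e4 - wj * S * e2
    have h6 : wj * S ^ 2 ≤ wj * (m * Q) := mul_le_mul_of_nonneg_left hcs hwj.le
    linarith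
  linarith
end

section
/- Fix a metric space (V,w,d) and λ > 0, let i' ∈ V and V' := V \ {i'}. For j ∈ V' let r_j, C_j be defined with respect to (V,w,d) (with β = 1), and r'_j, C'_j with respect to (V',w,d), where C_j := (1/λ)·Σ_{i ∈ B(j, r_j)} w(i)·(r_j − d(i,j))·w(j)·d(i,j). Then for every j ∈ V', w(j)·r_j + C_j ≤ w(j)·r'_j + C'_j. -/
open Finset in
lemma stmt16_tight {V : Type*} [Fintype V] [DecidableEq V] [MetricSpace V]
    (w : V → ℝ) (hw : ∀ i, 0 < w i) (lam : ℝ) (hlam : 0 < lam)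
    (s : Finset V) (j : V) (t : ℝ)
    (h : IsLeast {t : ℝ | 0 ≤ t ∧
      lam ≤ ∑ i ∈ s.filter (fun i => dist i j ≤ t), w i * (t - dist i j)} t) :
    ∑ i ∈ s.filter (fun i => dist i j ≤ t), w i * (t - dist i j) = lam := by
  obtain ⟨⟨ht0, hge⟩, hmin⟩ := h
  by_contra hne
  have hgt : lam < ∑ i ∈ s.filter (fun i => dist i j ≤ t), w i * (t - dist i j) :=
    lt_of_le_of_ne hge (Ne.symm hne)
  set F : ℝ → ℝ := fun u => ∑ i ∈ s.filter (fun i => dist i j ≤ u), w i * (u - dist i j)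
    with hF
  -- t > 0
  have htpos : 0 < t := by
    rcases lt_or_eq_of_le ht0 with h | h
    · exact h
    · exfalso
      have : F t = 0 := by
        rw [hF]
        apply Finset.sum_eq_zero
        intro i hi
        simp only [Finset.mem_filter] at hi
        have : dist i j = 0 := le_antisymm (by linarith [hi.2, h.symm ▸ hi.2]) dist_nonneg
        rw [this]
        simp [← h]
      simp only [hF] at this
      rw [this] at hgt
      linarith
  set W : ℝ := (∑ i ∈ s.filter (fun i => dist i j ≤ t), w i) + 1 with hW
  have hW0 : 0 ≤ ∑ i ∈ s.filter (fun i => dist i j ≤ t), w i :=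
    Finset.sum_nonneg fun i _ => (hw i).le
  have hWpos : 0 < W := by linarith
  set ε : ℝ := (F t - lam) / W with hε
  have hεpos : 0 < ε := div_pos (by simpa [hF] using sub_pos.mpr hgt) hWpos
  set u : ℝ := max 0 (t - ε) with hu
  have hu0 : 0 ≤ u := le_max_left _ _
  have hut : u < t := by
    apply max_lt htpos
    linarith
  have hkey : lam ≤ F u := by
    have hsub : s.filter (fun i => dist i j ≤ u) ⊆ s.filter (fun i => dist i j ≤ t) := by
      exact Finset.monotone_filter_right s (fun i _ hi => le_trans hi hut.le)
    have h1 : ∑ i ∈ s.filter (fun i => dist i j ≤ t), w i * (u - dist i j) ≤ F u := by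
      rw [hF, ← Finset.sum_sdiff hsub]
      have : ∑ i ∈ s.filter (fun i => dist i j ≤ t) \ s.filter (fun i => dist i j ≤ u),
          w i * (u - dist i j) ≤ 0 := by
        apply Finset.sum_nonpos
        intro i hi
        simp only [Finset.mem_sdiff, Finset.mem_filter] at hi
        have : u < dist i j := lt_of_not_ge fun hc => hi.2 ⟨hi.1.1, hc⟩
        have := (hw i).le
        nlinarith
      linarith
    have h2 : ∑ i ∈ s.filter (fun i => dist i j ≤ t), w i * (u - dist i j)
        = F t - (t - u) * (∑ i ∈ s.filter (fun i => dist i j ≤ t), w i) := by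
      rw [hF, Finset.mul_sum, ← Finset.sum_sub_distrib]
      apply Finset.sum_congr rfl
      intro i _
      ring
    have h3 : (t - u) * (∑ i ∈ s.filter (fun i => dist i j ≤ t), w i) ≤ F t - lam := by
      have htu : t - u ≤ ε := by
        have : t - ε ≤ u := le_max_right _ _
        linarith
      have : (t - u) * (∑ i ∈ s.filter (fun i => dist i j ≤ t), w i)
          ≤ ε * W := by
        apply mul_le_mul htu (by linarith) hW0 hεpos.le
      rw [hε] at this
      rw [div_mul_cancel₀] at this
      · exact this
      · exact ne_of_gt hWpos
    linarith
  have := hmin ⟨hu0, by simpa [hF] using hkey⟩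
  linarith

lemma stmt16_split {V : Type*} [Fintype V] [DecidableEq V] (i' : V)
    (p : V → Prop) [DecidablePred p] (g : V → ℝ) :
    ∑ i ∈ Finset.univ.filter p, g i
      = ∑ i ∈ (Finset.univ.erase i').filter p, g i + (if p i' then g i' else 0) := by
  rw [Finset.filter_erase]
  by_cases hp : p i'
  · rw [if_pos hp]
    have hmem : i' ∈ Finset.univ.filter p := Finset.mem_filter.mpr ⟨Finset.mem_univ _, hp⟩
    rw [← Finset.add_sum_erase _ g hmem]
    ring
  · rw [if_neg hp, Finset.erase_eq_of_notMem (by simp [hp]), add_zero]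

/-- Monotonicity Lemma: removing the point `i'` from the space can only increase each
remaining client's combined fractional opening plus connection contribution:
`w(j)·r_j + C_j ≤ w(j)·r'_j + C'_j` for all `j ≠ i'`. -/
theorem stmt16 {V : Type*} [Fintype V] [DecidableEq V] [MetricSpace V]
    (w : V → ℝ) (hw : ∀ i, 0 < w i) (lam : ℝ) (hlam : 0 < lam) (i' : V)
    (r r' : V → ℝ)
    (hr : ∀ j, IsLeast {t : ℝ | 0 ≤ t ∧
      lam ≤ ∑ i ∈ Finset.univ.filter (fun i => dist i j ≤ t), w i * (t - dist i j)} (r j))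
    (hr' : ∀ j, IsLeast {t : ℝ | 0 ≤ t ∧
      lam ≤ ∑ i ∈ (Finset.univ.erase i').filter (fun i => dist i j ≤ t),
        w i * (t - dist i j)} (r' j))
    (j : V) (hj : j ≠ i') :
    w j * r j + (1 / lam) * ∑ i ∈ Finset.univ.filter (fun i => dist i j ≤ r j),
        w i * (r j - dist i j) * (w j * dist i j)
      ≤ w j * r' j + (1 / lam) * ∑ i ∈ (Finset.univ.erase i').filter (fun i => dist i j ≤ r' j),
          w i * (r' j - dist i j) * (w j * dist i j) := by
  have hlamne : lam ≠ 0 := ne_of_gt hlam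
  set t := r j with htdef
  set t' := r' j with ht'def
  obtain ⟨⟨ht0, hge⟩, hmin⟩ := hr j
  obtain ⟨⟨ht'0, hge'⟩, hmin'⟩ := hr' j
  have hSA : ∑ i ∈ Finset.univ.filter (fun i => dist i j ≤ t), w i * (t - dist i j) = lam :=
    stmt16_tight w hw lam hlam Finset.univ j t ⟨⟨ht0, hge⟩, hmin⟩
  have hSA' : ∑ i ∈ (Finset.univ.erase i').filter (fun i => dist i j ≤ t'),
      w i * (t' - dist i j) = lam :=
    stmt16_tight w hw lam hlam (Finset.univ.erase i') j t' ⟨⟨ht'0, hge'⟩, hmin'⟩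
  -- t ≤ t'
  have htt' : t ≤ t' := by
    apply hmin
    refine ⟨ht'0, ?_⟩
    rw [← hSA']
    apply Finset.sum_le_sum_of_subset_of_nonneg
    · exact Finset.filter_subset_filter _ (Finset.erase_subset _ _)
    · intro i hi _
      simp only [Finset.mem_filter] at hi
      exact mul_nonneg (hw i).le (by linarith [hi.2])
  -- abbreviations
  set A : Finset V := Finset.univ.filter (fun i => dist i j ≤ t) with hA
  set B : Finset V := (Finset.univ.erase i').filter (fun i => dist i j ≤ t) with hB
  set A' : Finset V := (Finset.univ.erase i').filter (fun i => dist i j ≤ t') with hA'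
  have hBsub : B ⊆ A' :=
    Finset.monotone_filter_right _ (fun i _ hi => le_trans hi htt')
  set a : ℝ := (if dist i' j ≤ t then w i' * (t - dist i' j) else 0) with ha
  set aq : ℝ := (if dist i' j ≤ t then w i' * (t ^ 2 - dist i' j ^ 2) else 0) with haq
  set SB : ℝ := ∑ i ∈ B, w i * (t - dist i j) with hSB
  set WB : ℝ := ∑ i ∈ B, w i with hWB
  set S : ℝ := ∑ i ∈ A' \ B, w i * (t' - dist i j) with hS
  set QA : ℝ := ∑ i ∈ A, w i * (t ^ 2 - dist i j ^ 2) with hQA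
  set QB : ℝ := ∑ i ∈ B, w i * (t ^ 2 - dist i j ^ 2) with hQB
  set QA' : ℝ := ∑ i ∈ A', w i * (t' ^ 2 - dist i j ^ 2) with hQA'
  set QS : ℝ := ∑ i ∈ A' \ B, w i * (t' ^ 2 - dist i j ^ 2) with hQS
  -- split facts
  have f1 : lam = SB + a := by
    rw [← hSA, hSB, ha]
    exact stmt16_split i' _ _
  have hsum_split_B : ∑ i ∈ B, w i * (t' - dist i j) = SB + (t' - t) * WB := by
    rw [hSB, hWB, Finset.mul_sum, ← Finset.sum_add_distrib]
    apply Finset.sum_congr rfl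
    intro i _
    ring
  have f2 : lam = SB + (t' - t) * WB + S := by
    rw [← hSA', ← Finset.sum_sdiff hBsub, hsum_split_B, hS]
    ring
  have hrelA : a = (t' - t) * WB + S := by linarith
  have hQAsplit : QA = QB + aq := by
    rw [hQA, hQB, haq]
    exact stmt16_split i' _ _
  have hQBsplit : ∑ i ∈ B, w i * (t' ^ 2 - dist i j ^ 2) = QB + (t' ^ 2 - t ^ 2) * WB := by
    rw [hQB, hWB, Finset.mul_sum, ← Finset.sum_add_distrib]
    apply Finset.sum_congr rfl
    intro i _
    ring
  have hQA'split : QA' = QB + (t' ^ 2 - t ^ 2) * WB + QS := by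
    rw [hQA', ← Finset.sum_sdiff hBsub, hQBsplit, hQS]
    ring
  -- key inequalities
  have hQSge : (t' + t) * S ≤ QS := by
    rw [hS, hQS, Finset.mul_sum]
    apply Finset.sum_le_sum
    intro i hi
    have hi' := hi
    rw [Finset.mem_sdiff] at hi'
    have hiA' : i ∈ A' := hi'.1
    have hiB : i ∉ B := hi'.2
    rw [hA', Finset.mem_filter] at hiA'
    have hd' : dist i j ≤ t' := hiA'.2
    have hdt : t < dist i j := by
      by_contra hc
      exact hiB (Finset.mem_filter.mpr ⟨hiA'.1, not_lt.mp hc⟩)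
    have := (hw i).le
    nlinarith [mul_nonneg (mul_nonneg this (by linarith : (0:ℝ) ≤ t' - dist i j))
      (by linarith : (0:ℝ) ≤ dist i j - t)]
  have haqle : aq ≤ a * (t + t') := by
    rw [ha, haq]
    by_cases hd : dist i' j ≤ t
    · rw [if_pos hd, if_pos hd]
      have := (hw i').le
      have h2 : dist i' j ≤ t' := le_trans hd htt'
      nlinarith [mul_nonneg (mul_nonneg this (by linarith : (0:ℝ) ≤ t - dist i' j))
        (by linarith : (0:ℝ) ≤ t' - dist i' j)]
    · rw [if_neg hd, if_neg hd]
      simp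
  -- conclude QA ≤ QA'
  have hQle : QA ≤ QA' := by
    have hid : ((t' - t) * WB + S) * (t + t') = (t' ^ 2 - t ^ 2) * WB + (t' + t) * S := by
      ring
    rw [hrelA] at haqle
    linarith [hQAsplit, hQA'split, hQSge, haqle, hid]
  -- convert both sides to the quadratic form
  have eL : w j * t + (1 / lam) * ∑ i ∈ A, w i * (t - dist i j) * (w j * dist i j)
      = (1 / lam) * (w j * QA) := by
    have h : lam * (w j * t) + ∑ i ∈ A, w i * (t - dist i j) * (w j * dist i j)
        = w j * QA := by
      rw [← hSA]
      rw [hQA, Finset.mul_sum, Finset.sum_mul, ← Finset.sum_add_distrib]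
      apply Finset.sum_congr rfl
      intro i _
      ring
    have hl : (1 / lam) * lam = 1 := one_div_mul_cancel hlamne
    linear_combination (1 / lam) * h - (w j * t) * hl
  have eR : w j * t' + (1 / lam) * ∑ i ∈ A', w i * (t' - dist i j) * (w j * dist i j)
      = (1 / lam) * (w j * QA') := by
    have h : lam * (w j * t') + ∑ i ∈ A', w i * (t' - dist i j) * (w j * dist i j)
        = w j * QA' := by
      rw [← hSA']
      rw [hQA', Finset.mul_sum, Finset.sum_mul, ← Finset.sum_add_distrib]
      apply Finset.sum_congr rfl
      intro i _
      ring
    have hl : (1 / lam) * lam = 1 := one_div_mul_cancel hlamne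
    linear_combination (1 / lam) * h - (w j * t') * hl
  rw [eL, eR]
  apply mul_le_mul_of_nonneg_left _ (by positivity)
  exact mul_le_mul_of_nonneg_left hQle (hw j).le
end
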